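/- arXiv:2503.00859 — 10 statements merged into one kernel-verified Lean document; each statement's English description precedes it below -/
import Mathlib

section
/- Let A be an S-ring over a finite abelian group G, V the thin radical of A, and X a basic set of A. Then for every x ∈ X, the set Xx^{-1} ∩ V is a subgroup of rad(X) = {g ∈ G : gX = X}, and this subgroup does not depend on the choice of x ∈ X. -/
open scoped Pointwise

/-- An S-ring (Schur ring) over a finite group `G`, presented by its
partition into basic sets: a partition of `G` containing `{1}`, closed under
inversion, and such that the span of the indicator elements is closed under
multiplication (expressed via constancy of structure constants). -/
structure SRing (G : Type*) [Group G] where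
  parts : Set (Set G)
  nonempty_mem : ∀ X ∈ parts, X.Nonempty
  one_mem : ({(1 : G)} : Set G) ∈ parts
  exists_mem : ∀ g : G, ∃ X ∈ parts, g ∈ X
  eq_of_mem : ∀ X ∈ parts, ∀ Y ∈ parts, ∀ g : G, g ∈ X → g ∈ Y → X = Y
  inv_mem : ∀ X ∈ parts, X⁻¹ ∈ parts
  structConst : ∀ X ∈ parts, ∀ Y ∈ parts, ∀ Z ∈ parts, ∀ z₁ ∈ Z, ∀ z₂ ∈ Z,
    {q : G × G | q.1 ∈ X ∧ q.2 ∈ Y ∧ q.1 * q.2 = z₁}.ncard =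
    {q : G × G | q.1 ∈ X ∧ q.2 ∈ Y ∧ q.1 * q.2 = z₂}.ncard

namespace SRing

variable {G : Type*} [Group G]

/-- The thin radical of an S-ring: the set of group elements whose
singleton is a basic set. -/
def thin (A : SRing G) : Set G := {x : G | ({x} : Set G) ∈ A.parts}

/-- A subgroup `H` is an `A`-subgroup if it is a union of basic sets. -/
def IsASubgroup (A : SRing G) (H : Subgroup G) : Prop :=
  ∀ X ∈ A.parts, ∀ g ∈ X, g ∈ H → X ⊆ (H : Set G)

/-- `A = ZG`, i.e. every basic set is a singleton. -/
def IsFull (A : SRing G) : Prop := ∀ X ∈ A.parts, ∃ g : G, X = {g}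

/-- A permutation is an automorphism of the S-ring `A` if it preserves the
partition of `G × G` induced by the basic sets. -/
def IsAut (A : SRing G) (f : Equiv.Perm G) : Prop :=
  ∀ X ∈ A.parts, ∀ x y : G, y * x⁻¹ ∈ X ↔ (f y) * (f x)⁻¹ ∈ X

end SRing

/-- The radical of a subset `X` of a group: the subgroup of elements `g`
with `g • X = X` (left translations stabilizing `X`). -/
def setRad {G : Type*} [Group G] (X : Set G) : Subgroup G where
  carrier := {g : G | g • X = X}
  one_mem' := one_smul G X
  mul_mem' := by
    intro a b ha hb
    simp only [Set.mem_setOf_eq] at *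
    rw [mul_smul, hb, ha]
  inv_mem' := by
    intro a ha
    simp only [Set.mem_setOf_eq] at *
    calc a⁻¹ • X = a⁻¹ • (a • X) := by rw [ha]
    _ = X := inv_smul_smul a X

/-- A permutation of `G` belongs to the holomorph `Hol(G)` if it is the
composition of an automorphism of `G` with a right translation. -/
def IsHolPerm {G : Type*} [Group G] (f : Equiv.Perm G) : Prop :=
  ∃ σ : MulAut G, ∃ a : G, ∀ g : G, f g = σ g * a

namespace SRing

variable {G : Type*} [Group G]

/-- An S-ring is normal if all of its automorphisms lie in the holomorph. -/
def IsNormal (A : SRing G) : Prop := ∀ f : Equiv.Perm G, A.IsAut f → IsHolPerm f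

/-- `f ∈ Iso(A)`: `f` is a combinatorial isomorphism from `A` onto some
S-ring over `G`. -/
def IsIsoPerm (A : SRing G) (f : Equiv.Perm G) : Prop :=
  ∃ B : SRing G, ∀ X ∈ A.parts, ∃ X' ∈ B.parts,
    ∀ x y : G, y * x⁻¹ ∈ X ↔ (f y) * (f x)⁻¹ ∈ X'

/-- An S-ring is CI if `Iso(A) = Aut(A)·Aut(G)`. -/
def IsCI (A : SRing G) : Prop :=
  ∀ f : Equiv.Perm G, A.IsIsoPerm f →
    ∃ a : Equiv.Perm G, A.IsAut a ∧ ∃ σ : MulAut G, ∀ x : G, f x = a (σ x)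

end SRing

/-- For an S-ring `A` over a finite abelian group `G` with thin
radical `V` and a basic set `X`, the set `Xx⁻¹ ∩ V` is a subgroup of
`rad(X)` not depending on the choice of `x ∈ X`. -/
theorem thincoset {G : Type*} [CommGroup G] [Fintype G]
    (A : SRing G) (X : Set G) (hX : X ∈ A.parts) :
    ∃ H : Subgroup G, H ≤ setRad X ∧
      ∀ x ∈ X, {g : G | g ∈ A.thin ∧ g * x ∈ X} = (H : Set G) := by

  classical
  -- Key: a thin element fixing one point of X fixes all of X
  have key : ∀ g : G, ({g} : Set G) ∈ A.parts → ∀ x ∈ X, g * x ∈ X → g • X = X := by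
    intro g hg x hx hgx
    have hsub : X ⊆ g • X := by
      intro x' hx'
      have h := A.structConst {g} hg X hX X hX (g * x) hgx x' hx'
      have h1 : ((g, x)) ∈ {q : G × G | q.1 ∈ ({g} : Set G) ∧ q.2 ∈ X ∧ q.1 * q.2 = g * x} :=
        ⟨rfl, hx, rfl⟩
      have hne : {q : G × G | q.1 ∈ ({g} : Set G) ∧ q.2 ∈ X ∧ q.1 * q.2 = x'}.Nonempty := by
        rw [← Set.ncard_pos (Set.toFinite _), ← h]
        exact (Set.ncard_pos (Set.toFinite _)).mpr ⟨_, h1⟩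
      obtain ⟨⟨p, q⟩, hp, hq, hpq⟩ := hne
      have : p = g := hp
      subst this
      exact ⟨q, hq, hpq⟩
    have hcard : (g • X).ncard = X.ncard := Set.ncard_smul_set g X
    exact (Set.eq_of_subset_of_ncard_le hsub (le_of_eq hcard) (Set.toFinite _)).symm
  -- thin is closed under multiplication
  have thin_mul : ∀ a b : G, a ∈ A.thin → b ∈ A.thin → a * b ∈ A.thin := by
    intro a b ha hb
    obtain ⟨Z, hZ, hab⟩ := A.exists_mem (a * b)
    have hZeq : Z = {a * b} := by
      rw [Set.eq_singleton_iff_unique_mem]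
      refine ⟨hab, fun z hz => ?_⟩
      have h := A.structConst {a} ha {b} hb Z hZ (a * b) hab z hz
      have h1 : ((a, b)) ∈ {q : G × G | q.1 ∈ ({a} : Set G) ∧ q.2 ∈ ({b} : Set G) ∧ q.1 * q.2 = a * b} :=
        ⟨rfl, rfl, rfl⟩
      have hne : {q : G × G | q.1 ∈ ({a} : Set G) ∧ q.2 ∈ ({b} : Set G) ∧ q.1 * q.2 = z}.Nonempty := by
        rw [← Set.ncard_pos (Set.toFinite _), ← h]
        exact (Set.ncard_pos (Set.toFinite _)).mpr ⟨_, h1⟩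
      obtain ⟨⟨p, q⟩, hp, hq, hpq⟩ := hne
      have hp' : p = a := hp
      have hq' : q = b := hq
      subst hp'; subst hq'
      exact hpq.symm
    rw [hZeq] at hZ
    exact hZ
  refine ⟨{ carrier := {g : G | g ∈ A.thin ∧ g • X = X}
            one_mem' := ⟨A.one_mem, one_smul G X⟩
            mul_mem' := ?_
            inv_mem' := ?_ }, ?_, ?_⟩
  · rintro a b ⟨ha1, ha2⟩ ⟨hb1, hb2⟩
    refine ⟨thin_mul a b ha1 hb1, ?_⟩
    rw [mul_smul, hb2, ha2]
  · rintro a ⟨ha1, ha2⟩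
    refine ⟨?_, ?_⟩
    · have := A.inv_mem {a} ha1
      rwa [Set.inv_singleton] at this
    · calc a⁻¹ • X = a⁻¹ • (a • X) := by rw [ha2]
        _ = X := inv_smul_smul a X
  · rintro g ⟨_, hg⟩
    exact hg
  · intro x hx
    ext g
    simp only [Set.mem_setOf_eq, SetLike.mem_coe, Subgroup.mem_mk]
    constructor
    · rintro ⟨h1, h2⟩
      exact ⟨h1, key g h1 x hx h2⟩
    · rintro ⟨h1, h2⟩
      refine ⟨h1, ?_⟩
      rw [← h2]
      exact Set.smul_mem_smul_set hx
end

section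
/- Let A be a normal S-ring over a finite abelian group G that is a nontrivial U/L-generalized wreath product for an A-section U/L. Then L and G/U are elementary abelian 2-groups. -/
open scoped Pointwise

/-!
Fix a nontrivial element `h ∈ L`. The permutation of `G` that fixes `U` pointwise and multiplies
every element outside `U` by `h` preserves every basic set (those inside `U` trivially, the others
because `L` lies in their radical), so it is an automorphism of `A`. It fixes `1`, hence by
normality it is a group automorphism `σ`. For `g ∉ U` we get `σ (g ^ 2) = g ^ 2 * h ^ 2`, whereas
`σ (g ^ 2)` is `g ^ 2` if `g ^ 2 ∈ U` and `g ^ 2 * h` otherwise. The second case forces `h = 1`, so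
`g ^ 2 ∈ U` always, and then the first case gives `h ^ 2 = 1`.
-/

open scoped Classical

section Group

variable {G : Type*} [Group G]

noncomputable def shiftOutside (U : Subgroup G) {h : G} (hh : h ∈ U) : Equiv.Perm G where
  toFun g := if g ∈ U then g else g * h
  invFun g := if g ∈ U then g else g * h⁻¹
  left_inv g := by
    by_cases hg : g ∈ U
    · simp [hg]
    · simp [hg, U.mul_mem_cancel_right hh]
  right_inv g := by
    by_cases hg : g ∈ U
    · simp [hg]
    · simp [hg, U.mul_mem_cancel_right (U.inv_mem hh)]

theorem shiftOutside_apply (U : Subgroup G) {h : G} (hh : h ∈ U) (g : G) :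
    shiftOutside U hh g = if g ∈ U then g else g * h :=
  rfl

theorem IsHolPerm.exists_mulAut_eq {f : Equiv.Perm G} (hf : IsHolPerm f) (h1 : f 1 = 1) :
    ∃ σ : MulAut G, ∀ g, σ g = f g := by
  obtain ⟨σ, a, hσ⟩ := hf
  have ha : a = 1 := by simpa [h1] using (hσ 1).symm
  exact ⟨σ, fun g => by simp [hσ, ha]⟩

end Group

section CommGroup

variable {G : Type*} [CommGroup G] {U L : Subgroup G}

theorem mul_mem_iff_of_notMem (hLU : L ≤ U) {X : Set G}
    (hX : X ⊆ U ∨ ∀ l ∈ L, l • X = X) {z l : G} (hz : z ∉ U) (hl : l ∈ L) :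
    z * l ∈ X ↔ z ∈ X := by
  rcases hX with hXU | hrad
  · have hzl : z * l ∉ U := (U.mul_mem_cancel_right (hLU hl)).not.mpr hz
    exact iff_of_false (fun h => hzl (hXU h)) (fun h => hz (hXU h))
  · calc z * l ∈ X ↔ l • z ∈ l • X := by rw [hrad l hl, smul_eq_mul, mul_comm]
      _ ↔ z ∈ X := Set.smul_mem_smul_set_iff

theorem SRing.isAut_shiftOutside (A : SRing G) (hLU : L ≤ U)
    (hwr : ∀ X ∈ A.parts, ¬ X ⊆ (U : Set G) → ∀ l ∈ L, l • X = X) {h : G} (hh : h ∈ L) :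
    A.IsAut (shiftOutside U (hLU hh)) := by
  intro X hX x y
  have hX' : X ⊆ U ∨ ∀ l ∈ L, l • X = X := or_iff_not_imp_left.mpr (hwr X hX)
  simp only [shiftOutside_apply]
  by_cases hx : x ∈ U <;> by_cases hy : y ∈ U
  · simp only [hx, hy, if_true]
  · have hyx : y * x⁻¹ ∉ U := (U.mul_mem_cancel_right (U.inv_mem hx)).not.mpr hy
    rw [if_pos hx, if_neg hy, mul_right_comm, mul_mem_iff_of_notMem hLU hX' hyx hh]
  · have hyx : y * x⁻¹ ∉ U := (U.mul_mem_cancel_left hy).not.mpr (inv_mem_iff.not.mpr hx)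
    rw [if_neg hx, if_pos hy, mul_inv, ← mul_assoc,
      mul_mem_iff_of_notMem hLU hX' hyx (L.inv_mem hh)]
  · rw [if_neg hx, if_neg hy, mul_inv, mul_mul_mul_comm, mul_inv_cancel, mul_one]

theorem SRing.IsNormal.exists_mulAut_shiftOutside {A : SRing G} (hnorm : A.IsNormal)
    (hLU : L ≤ U) (hwr : ∀ X ∈ A.parts, ¬ X ⊆ (U : Set G) → ∀ l ∈ L, l • X = X)
    {h : G} (hh : h ∈ L) :
    ∃ σ : MulAut G, ∀ g, σ g = if g ∈ U then g else g * h :=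
  (hnorm _ (A.isAut_shiftOutside hLU hwr hh)).exists_mulAut_eq (if_pos U.one_mem)

section Shift

variable {σ : G →* G} {h : G} (hσ : ∀ g, σ g = if g ∈ U then g else g * h)
  {g : G} (hg : g ∉ U)
include hσ hg

theorem map_sq_of_shiftOutside : σ (g ^ 2) = g ^ 2 * h ^ 2 := by
  rw [map_pow, hσ, if_neg hg, mul_pow]

theorem sq_mem_of_shiftOutside (hh : h ≠ 1) : g ^ 2 ∈ U := by
  by_contra hg2
  have := map_sq_of_shiftOutside hσ hg
  rw [hσ, if_neg hg2, pow_two h, ← mul_assoc, left_eq_mul] at this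
  exact hh this

theorem sq_eq_one_of_shiftOutside (hg2 : g ^ 2 ∈ U) : h ^ 2 = 1 := by
  have := map_sq_of_shiftOutside hσ hg
  rwa [hσ, if_pos hg2, left_eq_mul] at this

end Shift

end CommGroup

theorem wrnorm_general {G : Type*} [CommGroup G]
    (A : SRing G) (hnorm : A.IsNormal)
    (U L : Subgroup G) (hLU : L ≤ U) (hLbot : L ≠ ⊥) (hUtop : U ≠ ⊤)
    (hwr : ∀ X ∈ A.parts, ¬ X ⊆ (U : Set G) → ∀ l ∈ L, l • X = X) :
    (∀ l ∈ L, l ^ 2 = 1) ∧ (∀ g : G, g ∉ U → g ^ 2 ∈ U) := by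
  have sq_mem : ∀ g : G, g ∉ U → g ^ 2 ∈ U := by
    intro g hg
    obtain ⟨h, hh, hh1⟩ := L.bot_or_exists_ne_one.resolve_left hLbot
    obtain ⟨σ, hσ⟩ := hnorm.exists_mulAut_shiftOutside hLU hwr hh
    exact sq_mem_of_shiftOutside (σ := σ.toMonoidHom) hσ hg hh1
  refine ⟨fun l hl => ?_, sq_mem⟩
  obtain ⟨g, hg⟩ := SetLike.exists_not_mem_of_ne_top U hUtop
  obtain ⟨σ, hσ⟩ := hnorm.exists_mulAut_shiftOutside hLU hwr hl
  exact sq_eq_one_of_shiftOutside (σ := σ.toMonoidHom) hσ hg (sq_mem g hg)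

/-- If a normal S-ring `A` over a finite abelian group `G` is a
nontrivial `U/L`-generalized wreath product, then `L` and `G/U` are
elementary abelian `2`-groups. -/
theorem wrnorm {G : Type*} [CommGroup G] [Fintype G]
    (A : SRing G) (hnorm : A.IsNormal)
    (U L : Subgroup G) (hU : A.IsASubgroup U) (hL : A.IsASubgroup L)
    (hLU : L ≤ U) (hLbot : L ≠ ⊥) (hUtop : U ≠ ⊤)
    (hwr : ∀ X ∈ A.parts, ¬ X ⊆ (U : Set G) → ∀ l ∈ L, l • X = X) :
    (∀ l ∈ L, l ^ 2 = 1) ∧ (∀ g : G, g ∉ U → g ^ 2 ∈ U) :=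
  wrnorm_general A hnorm U L hLU hLbot hUtop hwr
end

section
/- Let G be an abelian group, f a permutation of G which fixes every element of a subgroup U ≤ G and maps every g ∈ G∖U to gh for a fixed element h ∈ G with h ≠ e. If f lies in Hol(G) (i.e. f is the composition of a group automorphism of G with a right translation), then h² = e and g² ∈ U for every g ∈ G∖U; consequently ⟨h⟩ is an elementary abelian 2-group and every element of G/U has order at most 2. -/
/-- Let `G` be a finite abelian group, `U` a proper subgroup,
`h ≠ 1`, and `f` a permutation of `G` fixing `U` pointwise and mapping each
`g ∉ U` to `g * h`. If `f ∈ Hol(G)`, then `h² = 1` and `g² ∈ U` for every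
`g ∉ U`; consequently `⟨h⟩` is elementary abelian of exponent 2 and every
element of `G/U` has order at most 2. -/
theorem hol_perm_translation_square {G : Type*} [CommGroup G] [Fintype G]
    (U : Subgroup G) (hUtop : U ≠ ⊤) (h : G) (hh : h ≠ 1)
    (f : Equiv.Perm G)
    (hfix : ∀ g ∈ U, f g = g)
    (hmove : ∀ g : G, g ∉ U → f g = g * h)
    (hhol : IsHolPerm f) :
    h ^ 2 = 1 ∧ (∀ g : G, g ∉ U → g ^ 2 ∈ U) ∧
      (∀ z ∈ Subgroup.zpowers h, z ^ 2 = 1) ∧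
      (∀ q : G ⧸ U, q ^ 2 = 1) := by
  obtain ⟨σ, a, hσ⟩ := hhol
  -- a = 1
  have ha : a = 1 := by
    have h1 := hσ 1
    rw [hfix 1 U.one_mem, map_one, one_mul] at h1
    exact h1.symm
  subst ha
  have hσeq : ∀ g : G, f g = σ g := by simpa using hσ
  -- key: for g ∉ U, g^2 ∈ U and h^2 = 1
  have key : ∀ g : G, g ∉ U → g ^ 2 ∈ U := by
    intro g hg
    by_contra hg2
    have e1 : σ (g ^ 2) = g ^ 2 * h := by rw [← hσeq, hmove _ hg2]
    have e2 : σ (g ^ 2) = (g * h) ^ 2 := by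
      rw [map_pow, ← hσeq, hmove _ hg]
    rw [e1, mul_pow] at e2
    have : h = h ^ 2 := by
      have := mul_left_cancel e2
      simpa using this
    have : h = 1 := by
      have h2 : h * 1 = h * h := by
        calc h * 1 = h := by rw [mul_one]
        _ = h ^ 2 := this
        _ = h * h := sq h
      exact (mul_left_cancel h2).symm
    exact hh this
  -- existence of g ∉ U
  obtain ⟨g0, hg0⟩ : ∃ g : G, g ∉ U := by
    by_contra hc
    push_neg at hc
    exact hUtop ((Subgroup.eq_top_iff' U).2 hc)
  have hsq : h ^ 2 = 1 := by
    have e1 : σ (g0 ^ 2) = g0 ^ 2 := by rw [← hσeq, hfix _ (key g0 hg0)]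
    have e2 : σ (g0 ^ 2) = (g0 * h) ^ 2 := by
      rw [map_pow, ← hσeq, hmove _ hg0]
    rw [e1, mul_pow] at e2
    have e3 : g0 ^ 2 * 1 = g0 ^ 2 * h ^ 2 := by rw [mul_one]; exact e2
    exact (mul_left_cancel e3).symm
  refine ⟨hsq, key, ?_, ?_⟩
  · rintro z ⟨n, rfl⟩
    rw [← zpow_natCast, ← zpow_mul, mul_comm, zpow_mul, zpow_natCast, hsq, one_zpow]
  · intro q
    induction q using QuotientGroup.induction_on with
    | H g =>
      by_cases hg : g ∈ U
      · have : (g : G ⧸ U) = 1 := (QuotientGroup.eq_one_iff g).2 hg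
        rw [this, one_pow]
      · rw [← QuotientGroup.mk_pow]
        exact (QuotientGroup.eq_one_iff _).2 (key g hg)
end

section
/- Let G be a finite abelian group, R ≠ G_r a G-regular subgroup of Sym(G), K = ⟨G_r, R⟩, A = V(K,G) the transitivity-module S-ring, and V = O_θ(A) the thin radical. Then G_r ∩ R = V_r (the group of right translations by elements of V). -/
/-- The right regular representation `G →* Sym(G)`, `g ↦ (x ↦ x * g)`
(made a homomorphism w.r.t. the permutation product `(f*g) x = f (g x)`). -/
def rightRegHom (G : Type*) [Group G] : G →* Equiv.Perm G where
  toFun g := Equiv.mulRight g⁻¹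
  map_one' := by ext x; simp
  map_mul' a b := by ext x; simp [mul_assoc]

/-- The group of right translations `G_r ≤ Sym(G)`. -/
def rightReg (G : Type*) [Group G] : Subgroup (Equiv.Perm G) :=
  (rightRegHom G).range

/-- A subgroup of `Sym(α)` is regular if it acts simply transitively. -/
def IsRegularPermSubgroup {α : Type*} (R : Subgroup (Equiv.Perm α)) : Prop :=
  ∀ x y : α, ∃! r : R, (r : Equiv.Perm α) x = y

/-- A `G`-regular subgroup of `Sym(G)`: a regular subgroup isomorphic to `G`. -/
def IsGRegular (G : Type*) [Group G] (R : Subgroup (Equiv.Perm G)) : Prop :=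
  IsRegularPermSubgroup R ∧ Nonempty (R ≃* G)

/-- The holomorph `Hol(G) = G_r ⋊ Aut(G)` as a subgroup of `Sym(G)`. -/
def hol (G : Type*) [Group G] : Subgroup (Equiv.Perm G) where
  carrier := {f : Equiv.Perm G | ∃ σ : MulAut G, ∃ a : G, ∀ g : G, f g = σ g * a}
  one_mem' := ⟨1, 1, fun g => by simp⟩
  mul_mem' := by
    rintro f f' ⟨σ, a, hf⟩ ⟨σ', a', hf'⟩
    refine ⟨σ * σ', σ a' * a, fun g => ?_⟩
    rw [Equiv.Perm.mul_apply, hf' g, hf, map_mul]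
    simp [mul_assoc]
  inv_mem' := by
    rintro f ⟨σ, a, hf⟩
    refine ⟨σ⁻¹, σ⁻¹ (a⁻¹), fun g => f.injective ?_⟩
    rw [show ∀ (e : Equiv.Perm G) (x : G), e (e⁻¹ x) = x from fun e x => e.apply_symm_apply x, hf, ← map_mul]
    simp

/-- The 2-closure of a permutation group: all permutations preserving each
orbit of the componentwise action on ordered pairs. -/
def twoClosure {α : Type*} (K : Subgroup (Equiv.Perm α)) : Subgroup (Equiv.Perm α) where
  carrier := {f : Equiv.Perm α | ∀ x y : α, ∃ k ∈ K, f x = k x ∧ f y = k y}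
  one_mem' := fun x y => ⟨1, K.one_mem, rfl, rfl⟩
  mul_mem' := by
    intro f g hf hg x y
    obtain ⟨k, hk, hk1, hk2⟩ := hg x y
    obtain ⟨k', hk', h1, h2⟩ := hf (g x) (g y)
    refine ⟨k' * k, mul_mem hk' hk, ?_, ?_⟩
    · rw [Equiv.Perm.mul_apply, Equiv.Perm.mul_apply, h1, hk1]
    · rw [Equiv.Perm.mul_apply, Equiv.Perm.mul_apply, h2, hk2]
  inv_mem' := by
    intro f hf x y
    obtain ⟨k, hk, h1, h2⟩ := hf (f⁻¹ x) (f⁻¹ y)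
    refine ⟨k⁻¹, inv_mem hk, k.injective ?_, k.injective ?_⟩
    · rw [(show ∀ (e : Equiv.Perm α) (x : α), e (e⁻¹ x) = x from fun e x => e.apply_symm_apply x), ← h1, (show ∀ (e : Equiv.Perm α) (x : α), e (e⁻¹ x) = x from fun e x => e.apply_symm_apply x)]
    · rw [(show ∀ (e : Equiv.Perm α) (x : α), e (e⁻¹ x) = x from fun e x => e.apply_symm_apply x), ← h2, (show ∀ (e : Equiv.Perm α) (x : α), e (e⁻¹ x) = x from fun e x => e.apply_symm_apply x)]

/-- A permutation group `K` with `G_r ≤ K` is `G`-transjugate if every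
`G`-regular subgroup of `K` is conjugate in `K` to `G_r`. -/
def IsTransjugate (G : Type*) [Group G] (K : Subgroup (Equiv.Perm G)) : Prop :=
  ∀ R : Subgroup (Equiv.Perm G), R ≤ K → IsGRegular G R →
    ∃ k ∈ K, Subgroup.map (MulAut.conj k).toMonoidHom R = rightReg G

/-- `G` is an `NCI⁽²⁾`-group: every 2-closed subgroup of `Sym(G)` between
`G_r` and `Hol(G)` is `G`-transjugate. -/
def IsNCI2 (G : Type*) [Group G] : Prop :=
  ∀ K : Subgroup (Equiv.Perm G), rightReg G ≤ K → K ≤ hol G →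
    twoClosure K = K → IsTransjugate G K

/-- The natural embedding `Sym(α) × Sym(β) →* Sym(α × β)`. -/
def prodPermHom (α β : Type*) : Equiv.Perm α × Equiv.Perm β →* Equiv.Perm (α × β) where
  toFun p := Equiv.prodCongr p.1 p.2
  map_one' := by ext x <;> simp
  map_mul' p q := by ext x <;> simp

/-!
Both `G_r` and `R` are abelian, so `G_r ∩ R` centralizes `K = ⟨G_r, R⟩`; conversely `R`, being
abelian and transitive, is self-centralizing, hence `G_r ∩ R = G_r ∩ Z(K)`. For `G` abelian and
`G_r ≤ K`, the translation `v_r` is central in `K` exactly when `v` is fixed by the stabilizer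
`K_1`, because conjugating `k ∈ K` by suitable translations lands in `K_1`. So `G_r ∩ Z(K) = V_r`.
-/

open Equiv Subgroup

instance rightReg.isMulCommutative (G : Type*) [CommGroup G] : IsMulCommutative (rightReg G) :=
  inferInstanceAs (IsMulCommutative (rightRegHom G).range)

@[simp]
lemma rightRegHom_apply {G : Type*} [Group G] (g x : G) : rightRegHom G g x = x * g⁻¹ := rfl

@[simp]
lemma rightRegHom_symm_apply {G : Type*} [Group G] (g x : G) : (rightRegHom G g).symm x = x * g := by
  simp [rightRegHom]

lemma IsGRegular.isMulCommutative {G : Type*} [CommGroup G] {R : Subgroup (Perm G)}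
    (hR : IsGRegular G R) : IsMulCommutative R := by
  obtain ⟨e⟩ := hR.2
  exact .of_comm fun a b => e.injective (by rw [map_mul, map_mul, mul_comm])

lemma IsRegularPermSubgroup.isPretransitive {α : Type*} {R : Subgroup (Perm α)}
    (hR : IsRegularPermSubgroup R) : MulAction.IsPretransitive R α :=
  ⟨fun x y => (hR x y).exists⟩

lemma Subgroup.centralizer_sup {Γ : Type*} [Group Γ] (H K : Subgroup Γ) :
    centralizer ((H ⊔ K : Subgroup Γ) : Set Γ) = centralizer H ⊓ centralizer K := by
  rw [sup_eq_closure, centralizer_closure]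
  exact SetLike.coe_injective (Set.centralizer_union ..)

lemma Subgroup.centralizer_le_self_of_isPretransitive {α : Type*} {R : Subgroup (Perm α)}
    [IsMulCommutative R] [MulAction.IsPretransitive R α] : centralizer (R : Set (Perm α)) ≤ R := by
  intro f hf
  rcases isEmpty_or_nonempty α with hα | ⟨⟨x⟩⟩
  · exact Subsingleton.elim 1 f ▸ R.one_mem
  obtain ⟨r, hr⟩ := MulAction.exists_smul_eq R x (f x)
  suffices f = r from this ▸ r.2
  ext y
  obtain ⟨s, rfl⟩ := MulAction.exists_smul_eq R x y
  have hfs : (s : Perm α) * f = f * s := mem_centralizer_iff.1 hf s s.2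
  calc f (s • x) = (s : Perm α) (f x) := (Perm.ext_iff.1 hfs x).symm
    _ = ((s * r : R) : Perm α) x := by rw [← hr]; rfl
    _ = (r : Perm α) (s • x) := by rw [mul_comm' s r]; rfl

lemma Subgroup.inf_eq_inf_centralizer_sup {Γ : Type*} [Group Γ] {H R : Subgroup Γ}
    [IsMulCommutative H] [IsMulCommutative R] (hR : centralizer (R : Set Γ) ≤ R) :
    H ⊓ R = H ⊓ centralizer ((H ⊔ R : Subgroup Γ) : Set Γ) := by
  rw [centralizer_sup]
  refine le_antisymm (fun f ⟨hfH, hfR⟩ => ⟨hfH, le_centralizer H hfH, le_centralizer R hfR⟩) ?_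
  exact fun f ⟨hfH, _, hfR⟩ => ⟨hfH, hR hfR⟩

/-- The thin radical `O_θ(V(K,G))` of the transitivity module of `K`. -/
def thinRadical {G : Type*} [Group G] (K : Subgroup (Perm G)) : Set G :=
  {v | ∀ k : Perm G, k ∈ K → k 1 = 1 → k v = v}

lemma mem_thinRadical_iff {G : Type*} [CommGroup G] {K : Subgroup (Perm G)}
    (hK : rightReg G ≤ K) (v : G) :
    v ∈ thinRadical K ↔ rightRegHom G v ∈ centralizer (K : Set (Perm G)) := by
  constructor
  · intro hv
    suffices rightRegHom G v⁻¹ ∈ centralizer (K : Set (Perm G)) by simpa using inv_mem this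
    refine mem_centralizer_iff.2 fun k hk => Perm.ext fun x => ?_
    -- `y ↦ k (y * x) * (k x)⁻¹` lies in `K_1`, so it fixes `v`.
    have hkx := hv (rightRegHom G (k x) * k * rightRegHom G x⁻¹)
      (mul_mem (mul_mem (hK ⟨_, rfl⟩) hk) (hK ⟨_, rfl⟩)) (by simp)
    simp only [Perm.mul_apply, rightRegHom_apply, inv_inv, mul_inv_eq_iff_eq_mul] at hkx
    rw [Perm.mul_apply, Perm.mul_apply, rightRegHom_apply, rightRegHom_apply, inv_inv, mul_comm x v,
      hkx, mul_comm]
  · intro hv k hk hk1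
    have hv' : rightRegHom G v⁻¹ * k = k * rightRegHom G v⁻¹ :=
      ((mem_centralizer_iff.1 (by simpa using inv_mem hv)) k hk).symm
    simpa [hk1] using (Perm.ext_iff.1 hv' 1).symm

theorem intersection_eq_thin_general {G : Type*} [CommGroup G]
    (R : Subgroup (Equiv.Perm G)) (hR : IsGRegular G R) :
    ∀ f : Equiv.Perm G, f ∈ rightReg G ⊓ R ↔
      ∃ v : G,
        (∀ k : Equiv.Perm G, k ∈ rightReg G ⊔ R → k 1 = 1 → k v = v) ∧
        f = rightRegHom G v := by
  have := hR.isMulCommutative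
  have := hR.1.isPretransitive
  intro f
  rw [inf_eq_inf_centralizer_sup centralizer_le_self_of_isPretransitive]
  constructor
  · rintro ⟨⟨v, rfl⟩, hv⟩
    exact ⟨v, (mem_thinRadical_iff le_sup_left v).2 hv, rfl⟩
  · rintro ⟨v, hv, rfl⟩
    exact ⟨⟨v, rfl⟩, (mem_thinRadical_iff le_sup_left v).1 hv⟩

/-- Let `G` be a finite abelian group, `R ≠ G_r` a
`G`-regular subgroup of `Sym(G)`, `K = ⟨G_r, R⟩`, `A = V(K,G)` and
`V = O_θ(A)` its thin radical (the set of fixed points of the stabilizer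
`K_e`). Then `G_r ∩ R = V_r`. -/
theorem intersection_eq_thin {G : Type*} [CommGroup G] [Fintype G]
    (R : Subgroup (Equiv.Perm G)) (hR : IsGRegular G R)
    (hne : R ≠ rightReg G) :
    ∀ f : Equiv.Perm G, f ∈ rightReg G ⊓ R ↔
      ∃ v : G,
        (∀ k : Equiv.Perm G, k ∈ rightReg G ⊔ R → k 1 = 1 → k v = v) ∧
        f = rightRegHom G v :=
  intersection_eq_thin_general R hR
end

section
/- Let p be a prime and A a p-S-ring over an abelian p-group G with thin radical V. If A ≠ ZG, then there exists a basic set X of A outside V such that X is a coset of a nontrivial subgroup of V. -/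
open scoped Pointwise

set_option linter.unusedSectionVars false

namespace SRing

section Aux

variable {G : Type*} [Group G] (A : SRing G)

lemma indicator_count (v : G) (X : Set G) (z : G) (h : v⁻¹ * z ∈ X) :
    {q : G × G | q.1 ∈ ({v} : Set G) ∧ q.2 ∈ X ∧ q.1 * q.2 = z}.ncard = 1 := by
  have : {q : G × G | q.1 ∈ ({v} : Set G) ∧ q.2 ∈ X ∧ q.1 * q.2 = z}
      = {(v, v⁻¹ * z)} := by
    ext ⟨a, b⟩
    simp only [Set.mem_setOf_eq, Set.mem_singleton_iff, Prod.mk.injEq]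
    constructor
    · rintro ⟨rfl, hb, hab⟩
      exact ⟨rfl, by rw [← hab]; group⟩
    · rintro ⟨rfl, rfl⟩
      exact ⟨rfl, h, by group⟩
  rw [this, Set.ncard_singleton]

lemma indicator_count_zero (v : G) (X : Set G) (z : G) (h : v⁻¹ * z ∉ X) :
    {q : G × G | q.1 ∈ ({v} : Set G) ∧ q.2 ∈ X ∧ q.1 * q.2 = z}.ncard = 0 := by
  have : {q : G × G | q.1 ∈ ({v} : Set G) ∧ q.2 ∈ X ∧ q.1 * q.2 = z} = ∅ := by
    ext ⟨a, b⟩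
    simp only [Set.mem_setOf_eq, Set.mem_empty_iff_false, iff_false, not_and]
    rintro rfl hb hab
    exact h (by rw [← hab]; simpa using hb)
  rw [this, Set.ncard_empty]

/-- Key iff from structure constants with a thin left factor. -/
lemma thin_key {v : G} (hv : v ∈ A.thin) {X : Set G} (hX : X ∈ A.parts)
    {Z : Set G} (hZ : Z ∈ A.parts) {z₁ z₂ : G} (h₁ : z₁ ∈ Z) (h₂ : z₂ ∈ Z) :
    v⁻¹ * z₁ ∈ X ↔ v⁻¹ * z₂ ∈ X := by
  have hsc := A.structConst _ hv X hX Z hZ z₁ h₁ z₂ h₂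
  constructor
  · intro h
    by_contra h'
    rw [indicator_count v X z₁ h, indicator_count_zero v X z₂ h'] at hsc
    simp at hsc
  · intro h
    by_contra h'
    rw [indicator_count v X z₂ h, indicator_count_zero v X z₁ h'] at hsc
    simp at hsc

lemma inv_thin {v : G} (hv : v ∈ A.thin) : v⁻¹ ∈ A.thin := by
  have := A.inv_mem _ hv
  rwa [Set.inv_singleton] at this

lemma translate_mem_parts {v : G} (hv : v ∈ A.thin) {X : Set G} (hX : X ∈ A.parts) :
    v • X ∈ A.parts := by
  obtain ⟨x₀, hx₀⟩ := A.nonempty_mem X hX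
  obtain ⟨Z, hZ, hvZ⟩ := A.exists_mem (v * x₀)
  have hmem : ∀ z : G, z ∈ v • X ↔ v⁻¹ * z ∈ X := by
    intro z
    rw [Set.mem_smul_set_iff_inv_smul_mem, smul_eq_mul]
  have hZsub : Z ⊆ v • X := by
    intro z hz
    rw [hmem]
    have := A.thin_key hv hX hZ hz hvZ
    rw [this]
    simpa using hx₀
  have hsub2 : v • X ⊆ Z := by
    rintro z ⟨x, hx, rfl⟩
    have key2 := A.thin_key (A.inv_thin hv) hZ hZ hvZ hvZ
    have key3 := A.thin_key (A.inv_thin hv) hZ hX hx hx₀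
    simp only [inv_inv, smul_eq_mul] at key3 ⊢
    exact key3.mpr hvZ
  have heq : Z = v • X := le_antisymm hZsub hsub2
  exact heq ▸ hZ

lemma part_eq {X Y : Set G} (hX : X ∈ A.parts) (hY : Y ∈ A.parts) {g : G}
    (hgX : g ∈ X) (hgY : g ∈ Y) : X = Y :=
  A.eq_of_mem X hX Y hY g hgX hgY

lemma one_thin : (1 : G) ∈ A.thin := A.one_mem

lemma mul_thin {v w : G} (hv : v ∈ A.thin) (hw : w ∈ A.thin) : v * w ∈ A.thin := by
  have := A.translate_mem_parts hv (X := {w}) hw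
  rwa [Set.smul_set_singleton, smul_eq_mul] at this

/-- The thin radical as a subgroup. -/
def thinSubgroup : Subgroup G where
  carrier := A.thin
  one_mem' := A.one_thin
  mul_mem' := fun ha hb => A.mul_thin ha hb
  inv_mem' := fun ha => A.inv_thin ha

lemma part_eq_singleton {X : Set G} (hX : X ∈ A.parts) {x : G} (hx : x ∈ X)
    (hthin : x ∈ A.thin) : X = {x} :=
  A.part_eq hX hthin hx rfl

lemma exists_ne_of_not_subset_thin {X : Set G} (hX : X ∈ A.parts)
    (hns : ¬ X ⊆ A.thin) : ∃ x ∈ X, ∃ y ∈ X, x ≠ y := by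
  obtain ⟨x₀, hx₀⟩ := A.nonempty_mem X hX
  by_contra h
  push_neg at h
  have hsing : X = {x₀} := by
    ext z
    simp only [Set.mem_singleton_iff]
    exact ⟨fun hz => (h x₀ hx₀ z hz).symm, fun hz => hz ▸ hx₀⟩
  have hthin : x₀ ∈ A.thin := by
    have : ({x₀} : Set G) ∈ A.parts := hsing ▸ hX
    exact this
  exact hns (by rw [hsing]; simpa using hthin)

/-- The stabilizer of a part inside the thin radical. -/
def stab (X : Set G) : Subgroup G where
  carrier := {v : G | v ∈ A.thin ∧ v • X = X}
  one_mem' := ⟨A.one_thin, one_smul G X⟩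
  mul_mem' := by
    rintro a b ⟨ha1, ha2⟩ ⟨hb1, hb2⟩
    exact ⟨A.mul_thin ha1 hb1, by rw [mul_smul, hb2, ha2]⟩
  inv_mem' := by
    rintro a ⟨ha1, ha2⟩
    refine ⟨A.inv_thin ha1, ?_⟩
    calc a⁻¹ • X = a⁻¹ • (a • X) := by rw [ha2]
    _ = X := inv_smul_smul a X

lemma mem_stab {X : Set G} {v : G} :
    v ∈ A.stab X ↔ v ∈ A.thin ∧ v • X = X := Iff.rfl

lemma ratio_mem_stab {X : Set G} (hX : X ∈ A.parts) {x y : G} (hx : x ∈ X)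
    (hy : y ∈ X) (hv : y * x⁻¹ ∈ A.thin) : y * x⁻¹ ∈ A.stab X := by
  refine ⟨hv, ?_⟩
  have hp : (y * x⁻¹) • X ∈ A.parts := A.translate_mem_parts hv hX
  have hyy : y ∈ (y * x⁻¹) • X := ⟨x, hx, by show (y * x⁻¹) • x = y; rw [smul_eq_mul]; group⟩
  exact A.part_eq hp hX hyy hy

lemma stab_smul_subset {X : Set G} {v : G} (hv : v ∈ A.stab X) {x : G} (hx : x ∈ X) :
    v * x ∈ X := by
  have := hv.2
  rw [← this]
  exact ⟨x, hx, rfl⟩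

lemma caseA {X : Set G} (hX : X ∈ A.parts) (hns : ¬ X ⊆ A.thin)
    (hall : ∀ x ∈ X, ∀ y ∈ X, y * x⁻¹ ∈ A.thin) :
    ∃ H : Subgroup G, H ≠ ⊥ ∧ (H : Set G) ⊆ A.thin ∧ ∃ g : G, X = (H : Set G) * {g} := by
  obtain ⟨x, hx, y, hy, hxy⟩ := A.exists_ne_of_not_subset_thin hX hns
  refine ⟨A.stab X, ?_, fun v hv => hv.1, x, ?_⟩
  · intro hbot
    have hv : y * x⁻¹ ∈ A.stab X := A.ratio_mem_stab hX hx hy (hall x hx y hy)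
    rw [hbot, Subgroup.mem_bot] at hv
    exact hxy (mul_inv_eq_one.mp hv).symm
  · ext z
    rw [Set.mem_mul]
    constructor
    · intro hz
      exact ⟨z * x⁻¹, A.ratio_mem_stab hX hx hz (hall x hx z hz), x, rfl, by group⟩
    · rintro ⟨h, hh, w, rfl, rfl⟩
      exact A.stab_smul_subset hh hx

end Aux

section CaseB

variable {G : Type*} [CommGroup G] [Fintype G] (A : SRing G)

lemma mem_thinSubgroup_iff {v : G} : v ∈ A.thinSubgroup ↔ v ∈ A.thin := Iff.rfl

open Classical in
noncomputable def imF (X : Set G) : Finset (G ⧸ A.thinSubgroup) :=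
  ((Set.toFinite X).toFinset).image (QuotientGroup.mk : G → G ⧸ A.thinSubgroup)

lemma mem_imF {X : Set G} {c : G ⧸ A.thinSubgroup} :
    c ∈ A.imF X ↔ ∃ x ∈ X, (QuotientGroup.mk x : G ⧸ A.thinSubgroup) = c := by
  classical
  simp only [imF, Finset.mem_image, Set.Finite.mem_toFinset]

lemma imF_smul {v : G} (hv : v ∈ A.thin) (X : Set G) : A.imF (v • X) = A.imF X := by
  ext c
  simp only [mem_imF]
  constructor
  · rintro ⟨z, ⟨x, hx, rfl⟩, hc⟩
    refine ⟨x, hx, ?_⟩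
    rw [← hc]
    show QuotientGroup.mk x = QuotientGroup.mk (v • x)
    rw [smul_eq_mul, QuotientGroup.mk_mul,
      (QuotientGroup.eq_one_iff v).mpr ((A.mem_thinSubgroup_iff).mpr hv), one_mul]
  · rintro ⟨x, hx, hc⟩
    refine ⟨v * x, ⟨x, hx, rfl⟩, ?_⟩
    rw [← hc, QuotientGroup.mk_mul,
      (QuotientGroup.eq_one_iff v).mpr ((A.mem_thinSubgroup_iff).mpr hv), one_mul]

lemma ratio_thin_of_mk_eq {x y : G}
    (h : (QuotientGroup.mk x : G ⧸ A.thinSubgroup) = QuotientGroup.mk y) :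
    y * x⁻¹ ∈ A.thin := by
  have := (QuotientGroup.eq (s := A.thinSubgroup)).mp h
  rw [mem_thinSubgroup_iff] at this
  rwa [mul_comm] at this

lemma imF_eq {X Y : Set G} (hX : X ∈ A.parts) (hY : Y ∈ A.parts)
    {c : G ⧸ A.thinSubgroup} (hcX : c ∈ A.imF X) (hcY : c ∈ A.imF Y) :
    A.imF X = A.imF Y := by
  rw [mem_imF] at hcX hcY
  obtain ⟨x, hx, hcx⟩ := hcX
  obtain ⟨y, hy, hcy⟩ := hcY
  have hthin : y * x⁻¹ ∈ A.thin := A.ratio_thin_of_mk_eq (hcx.trans hcy.symm)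
  have hYeq : Y = (y * x⁻¹) • X := by
    refine A.part_eq hY (A.translate_mem_parts hthin hX) hy ?_
    exact ⟨x, hx, by show (y * x⁻¹) • x = y; rw [smul_eq_mul]; group⟩
  rw [hYeq, A.imF_smul hthin]

lemma card_part_eq_mul {X : Set G} (hX : X ∈ A.parts) :
    X.ncard = (A.imF X).card * ((A.stab X : Set G)).ncard := by
  classical
  set π : G → G ⧸ A.thinSubgroup := QuotientGroup.mk with hπ
  set Xf := (Set.toFinite X).toFinset with hXf
  have hmemXf : ∀ x : G, x ∈ Xf ↔ x ∈ X := fun x => Set.Finite.mem_toFinset _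
  have hmap : ∀ x ∈ Xf, π x ∈ A.imF X := by
    intro x hx
    rw [mem_imF]
    exact ⟨x, (hmemXf x).mp hx, rfl⟩
  have hsum := Finset.card_eq_sum_card_fiberwise hmap
  have hfiber : ∀ c ∈ A.imF X, (Xf.filter (fun x => π x = c)).card
      = ((A.stab X : Set G)).ncard := by
    intro c hc
    rw [mem_imF] at hc
    obtain ⟨x, hx, rfl⟩ := hc
    have hset : (↑(Xf.filter (fun x' => π x' = π x)) : Set G)
        = (fun h => h * x) '' (A.stab X : Set G) := by
      ext x'
      simp only [Finset.coe_filter, Set.mem_setOf_eq, hmemXf, Set.mem_image]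
      constructor
      · rintro ⟨hx', hc⟩
        have hthin : x' * x⁻¹ ∈ A.thin := A.ratio_thin_of_mk_eq hc.symm
        exact ⟨x' * x⁻¹, A.ratio_mem_stab hX hx hx' hthin, by group⟩
      · rintro ⟨v, hv, rfl⟩
        refine ⟨A.stab_smul_subset hv hx, ?_⟩
        show π (v * x) = π x
        rw [hπ, QuotientGroup.mk_mul,
          (QuotientGroup.eq_one_iff v).mpr ((A.mem_thinSubgroup_iff).mpr hv.1), one_mul]
    have := congrArg Set.ncard hset
    rw [Set.ncard_coe_finset, Set.ncard_image_of_injective _ (mul_left_injective x)] at this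
    exact this
  rw [Finset.sum_congr rfl hfiber, Finset.sum_const, smul_eq_mul] at hsum
  have hXcard : X.ncard = Xf.card := by
    rw [← Set.ncard_coe_finset Xf, Set.Finite.coe_toFinset]
  rw [hXcard, hsum]

lemma p_dvd_imF_card {p : ℕ} (hp : p.Prime) {X : Set G} (hX : X ∈ A.parts)
    {k : ℕ} (hk : X.ncard = p ^ k)
    (hxy : ∃ x ∈ X, ∃ y ∈ X, y * x⁻¹ ∉ A.thin) :
    p ∣ (A.imF X).card := by
  obtain ⟨x, hx, y, hy, hxy⟩ := hxy
  have hmul := A.card_part_eq_mul hX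
  have hdvd : (A.imF X).card ∣ p ^ k := ⟨_, by rw [← hk, hmul]⟩
  obtain ⟨j, hjk, hj⟩ := (Nat.dvd_prime_pow hp).mp hdvd
  have hne1 : (A.imF X).card ≠ 1 := by
    have h2 : 1 < (A.imF X).card := by
      refine Finset.one_lt_card.mpr ⟨QuotientGroup.mk x, ?_, QuotientGroup.mk y, ?_, ?_⟩
      · exact (A.mem_imF).mpr ⟨x, hx, rfl⟩
      · exact (A.mem_imF).mpr ⟨y, hy, rfl⟩
      · intro h
        exact hxy (A.ratio_thin_of_mk_eq h)
    omega
  have hj0 : j ≠ 0 := by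
    rintro rfl
    rw [pow_zero] at hj
    exact hne1 hj
  rw [hj]
  exact dvd_pow_self p hj0

lemma imF_of_subset_thin {X : Set G} (hX : X ∈ A.parts) (h : X ⊆ A.thin) :
    A.imF X = {(1 : G ⧸ A.thinSubgroup)} := by
  obtain ⟨x, hx⟩ := A.nonempty_mem X hX
  have hXx : X = {x} := A.part_eq_singleton hX hx (h hx)
  ext c
  rw [mem_imF, Finset.mem_singleton]
  constructor
  · rintro ⟨x', hx', rfl⟩
    exact (QuotientGroup.eq_one_iff x').mpr ((A.mem_thinSubgroup_iff).mpr (h hx'))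
  · rintro rfl
    exact ⟨x, hx, (QuotientGroup.eq_one_iff x).mpr ((A.mem_thinSubgroup_iff).mpr (h hx))⟩

lemma caseB {p : ℕ} (hp : p.Prime) (hG : IsPGroup p G)
    (hpS : ∀ X ∈ A.parts, ∃ k : ℕ, X.ncard = p ^ k)
    (hnt : ∃ x : G, x ∉ A.thin)
    (hB : ∀ X ∈ A.parts, ¬ X ⊆ A.thin → ∃ x ∈ X, ∃ y ∈ X, y * x⁻¹ ∉ A.thin) :
    False := by
  classical
  haveI : Fact p.Prime := ⟨hp⟩
  haveI : Fintype (G ⧸ A.thinSubgroup) := Fintype.ofFinite _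
  have hsurj : ∀ q : G ⧸ A.thinSubgroup, ∃ g : G, (QuotientGroup.mk g : G ⧸ A.thinSubgroup) = q :=
    fun q => QuotientGroup.mk_surjective q
  choose rep hrep using hsurj
  choose pt hpt1 hpt2 using A.exists_mem
  set cl : G ⧸ A.thinSubgroup → Finset (G ⧸ A.thinSubgroup) :=
    fun q => A.imF (pt (rep q)) with hcl
  have hclparts : ∀ q, pt (rep q) ∈ A.parts := fun q => hpt1 _
  have hmemcl : ∀ q, q ∈ cl q := by
    intro q
    exact (A.mem_imF).mpr ⟨rep q, hpt2 _, hrep q⟩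
  have hcl_eq : ∀ q q' c, c ∈ cl q → c ∈ cl q' → cl q = cl q' :=
    fun q q' c h1 h2 => A.imF_eq (hclparts q) (hclparts q') h1 h2
  set C : Finset (Finset (G ⧸ A.thinSubgroup)) := Finset.univ.image cl with hC
  have hdisj : ∀ s ∈ C, ∀ t ∈ C, s ≠ t → Disjoint s t := by
    intro s hs t ht hst
    rw [hC, Finset.mem_image] at hs ht
    obtain ⟨q, _, rfl⟩ := hs
    obtain ⟨q', _, rfl⟩ := ht
    rw [Finset.disjoint_left]
    intro c hc hc'
    exact hst (hcl_eq q q' c hc hc')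
  have hcover : C.biUnion id = Finset.univ := by
    ext q
    simp only [Finset.mem_biUnion, id, Finset.mem_univ, iff_true]
    exact ⟨cl q, Finset.mem_image_of_mem cl (Finset.mem_univ q), hmemcl q⟩
  have hcard : Fintype.card (G ⧸ A.thinSubgroup) = ∑ s ∈ C, s.card := by
    rw [← Finset.card_univ, ← hcover]
    exact Finset.card_biUnion hdisj
  have h1C : ({(1 : G ⧸ A.thinSubgroup)} : Finset (G ⧸ A.thinSubgroup)) ∈ C := by
    have h1 : rep (1 : G ⧸ A.thinSubgroup) ∈ A.thin := by
      have h2 := (QuotientGroup.eq_one_iff (rep (1 : G ⧸ A.thinSubgroup))).mp (hrep 1)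
      exact (A.mem_thinSubgroup_iff).mp h2
    have hXsing := A.part_eq_singleton (hclparts 1) (hpt2 _) h1
    have : cl 1 = {(1 : G ⧸ A.thinSubgroup)} :=
      A.imF_of_subset_thin (hclparts 1) (by rw [hXsing]; simpa using h1)
    rw [← this]
    exact Finset.mem_image_of_mem cl (Finset.mem_univ 1)
  have hrest : ∀ s ∈ C, s ≠ {(1 : G ⧸ A.thinSubgroup)} → p ∣ s.card := by
    intro s hs hne1
    rw [hC, Finset.mem_image] at hs
    obtain ⟨q, _, rfl⟩ := hs
    by_cases hsub : pt (rep q) ⊆ A.thin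
    · exact absurd (A.imF_of_subset_thin (hclparts q) hsub) hne1
    · obtain ⟨k, hk⟩ := hpS _ (hclparts q)
      exact A.p_dvd_imF_card hp (hclparts q) hk (hB _ (hclparts q) hsub)
  have hsum1 : ∑ s ∈ C.erase {(1 : G ⧸ A.thinSubgroup)}, s.card + 1
      = Fintype.card (G ⧸ A.thinSubgroup) := by
    rw [hcard]
    have := Finset.sum_erase_add C (fun s => s.card) h1C
    simpa using this
  have hdvd1 : p ∣ ∑ s ∈ C.erase {(1 : G ⧸ A.thinSubgroup)}, s.card :=
    Finset.dvd_sum (fun s hs => hrest s (Finset.mem_erase.mp hs).2 (Finset.mem_erase.mp hs).1)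
  obtain ⟨x, hx⟩ := hnt
  have hx1 : (QuotientGroup.mk x : G ⧸ A.thinSubgroup) ≠ 1 := by
    intro h
    exact hx ((A.mem_thinSubgroup_iff).mp ((QuotientGroup.eq_one_iff x).mp h))
  haveI : Nontrivial (G ⧸ A.thinSubgroup) := ⟨⟨QuotientGroup.mk x, 1, hx1⟩⟩
  obtain ⟨n, hn⟩ := IsPGroup.iff_card.mp (hG.to_quotient A.thinSubgroup)
  have hQcard : Fintype.card (G ⧸ A.thinSubgroup) = p ^ n := by
    rw [← Nat.card_eq_fintype_card]
    exact hn
  have hn0 : n ≠ 0 := by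
    rintro rfl
    rw [pow_zero] at hQcard
    exact (Fintype.one_lt_card).ne' hQcard
  have hpQ : p ∣ Fintype.card (G ⧸ A.thinSubgroup) := hQcard ▸ dvd_pow_self p hn0
  have hone : p ∣ 1 := (Nat.dvd_add_right hdvd1).mp (hsum1 ▸ hpQ)
  exact (Nat.Prime.one_lt hp).ne' (Nat.dvd_one.mp hone)

end CaseB

end SRing

/-- If `A` is a `p`-S-ring over an abelian `p`-group `G`
with thin radical `V` and `A ≠ ℤG`, then some basic set of `A` outside
`V` is a coset of a nontrivial subgroup of `V`. -/
theorem setcoset {p : ℕ} (hp : p.Prime) {G : Type*} [CommGroup G] [Fintype G]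
    (hG : IsPGroup p G) (A : SRing G)
    (hpS : ∀ X ∈ A.parts, ∃ k : ℕ, X.ncard = p ^ k)
    (hne : ¬ A.IsFull) :
    ∃ X ∈ A.parts, ¬ X ⊆ A.thin ∧
      ∃ H : Subgroup G, H ≠ ⊥ ∧ (H : Set G) ⊆ A.thin ∧
        ∃ g : G, X = (H : Set G) * {g} := by
  classical
  by_cases hA : ∃ X ∈ A.parts, ¬ X ⊆ A.thin ∧ ∀ x ∈ X, ∀ y ∈ X, y * x⁻¹ ∈ A.thin
  · obtain ⟨X, hX, hns, hall⟩ := hA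
    obtain ⟨H, h1, h2, h3⟩ := A.caseA hX hns hall
    exact ⟨X, hX, hns, H, h1, h2, h3⟩
  · exfalso
    push_neg at hA
    refine A.caseB hp hG hpS ?_ ?_
    · rw [SRing.IsFull] at hne
      push_neg at hne
      obtain ⟨X, hX, hXs⟩ := hne
      obtain ⟨x, hx⟩ := A.nonempty_mem X hX
      exact ⟨x, fun hthin => hXs x (A.part_eq_singleton hX hx hthin)⟩
    · intro X hX hns
      exact hA X hX hns
end

section
/- Let p be a prime and A = cyc(M, G) a cyclotomic S-ring over an abelian p-group G where M ≤ Aut(G) is a p-group. If some basic set X of A has size p, then A has a basic set Y which is a coset of a subgroup of order p contained in the thin radical of A. -/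
open scoped Pointwise

/-!
The stabilizer `K` of `x` has index `p` in the `p`-group `M`, hence is normal, so `Q = M ⧸ K` is
cyclic of order `p` and acts on the subgroup `B` of `K`-fixed points of `G`, which contains `x`.
For a generator `σ` of `Q`, the endomorphism `c ↦ σ c / c` of `B` has a nontrivial `Q`-invariant
image, so by the fixed-point theorem for `p`-groups this image contains a nontrivial `Q`-fixed
element `h = σ y / y`. Then `σ ^ i y = h ^ i y`, so `h` has order `p` and the orbit of `y` is the
coset `⟨h⟩ y`.
-/

open MulAction Subgroup

theorem IsPGroup.normal_of_index_eq_prime {p : ℕ} (hp : p.Prime) {G : Type*} [Group G] [Finite G]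
    (hG : IsPGroup p G) {H : Subgroup G} (hH : H.index = p) : H.Normal := by
  have := Fact.mk hp
  obtain ⟨n, hn⟩ := IsPGroup.iff_card.mp hG
  have hn0 : n ≠ 0 := by
    rintro rfl
    have := hH ▸ H.index_dvd_card
    rw [hn, pow_zero, Nat.dvd_one] at this
    exact hp.ne_one this
  exact normal_of_index_eq_minFac_card (by rw [hn, Nat.pow_minFac hn0, hp.minFac_eq, hH])

theorem IsPGroup.exists_ne_one_fixed_of_smul_mem {p : ℕ} [Fact p.Prime] {P G : Type*} [Group P]
    [Group G] [MulDistribMulAction P G] (hP : IsPGroup p P) {D : Subgroup G} [Finite D]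
    (hD : IsPGroup p D) (hD_ne : D ≠ ⊥) (hsmul : ∀ a : P, ∀ g ∈ D, a • g ∈ D) :
    ∃ g ∈ D, g ≠ 1 ∧ ∀ a : P, a • g = g := by
  let S : SubMulAction P G := ⟨D, fun a g => hsmul a g⟩
  have hdvd : p ∣ Nat.card S :=
    hD.card_eq_or_dvd.resolve_left (mt Subgroup.card_eq_one.mp hD_ne)
  have hone : (⟨1, D.one_mem⟩ : S) ∈ fixedPoints P S := fun a => Subtype.ext (smul_one a)
  obtain ⟨⟨g, hgD⟩, hfix, hne⟩ := hP.exists_fixed_point_of_prime_dvd_card_of_fixed_point S hdvd hone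
  exact ⟨g, hgD, fun h => hne (Subtype.ext h.symm), fun a => congrArg Subtype.val (hfix a)⟩

theorem zpow_smul_eq_zpow_mul_of_smul_eq {Q B : Type*} [Group Q] [Group B]
    [MulDistribMulAction Q B] {σ : Q} {h y : B} (hh : σ • h = h) (hy : σ • y = h * y) (i : ℤ) :
    σ ^ i • y = h ^ i * y := by
  have hhi : ∀ j : ℤ, σ ^ j • h = h := fun j => (stabilizer Q h).zpow_mem hh j
  have hy' : σ⁻¹ • y = h⁻¹ * y := by
    rw [inv_smul_eq_iff, smul_mul', smul_inv', hh, hy, inv_mul_cancel_left]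
  induction i using Int.induction_on with
  | zero => simp
  | succ i ih =>
    rw [zpow_add_one, mul_smul, hy, smul_mul', hhi, ih]
    group
  | pred i ih =>
    rw [zpow_sub_one, mul_smul, hy', smul_mul', smul_inv', hhi, ih]
    group

theorem MulAction.orbit_coe_eq_image_orbit_quotient {M α : Type*} [Group M] [Group α]
    [MulDistribMulAction M α] (K : Subgroup M) [K.Normal] (y : FixedPoints.subgroup K α) :
    orbit M (y : α) = Subtype.val '' orbit (M ⧸ K) y := by
  rw [orbit, orbit, ← Set.range_comp, ← QuotientGroup.mk_surjective.range_comp]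
  rfl

theorem exists_orbit_eq_zpowers_mul_of_card_eq_prime {p : ℕ} [Fact p.Prime] {Q B : Type*}
    [Group Q] [CommGroup B] [Finite B] [MulDistribMulAction Q B] (hQ : Nat.card Q = p)
    (hB : IsPGroup p B) {σ : Q} {b : B} (hb : σ • b ≠ b) :
    ∃ h y : B, orderOf h = p ∧ (∀ q : Q, q • h = h) ∧ orbit Q y = (zpowers h : Set B) * {y} := by
  have hσ : σ ≠ 1 := by rintro rfl; exact hb (one_smul Q b)
  have hσ_gen (q : Q) : ∃ i : ℤ, σ ^ i = q := mem_zpowers_of_prime_card hQ hσ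
  let F : B →* B := MulDistribMulAction.toMonoidHom B σ / MonoidHom.id B
  have hF (c : B) : F c = σ • c / c := rfl
  have hF_smul (q : Q) (c : B) : q • F c = F (q • c) := by
    obtain ⟨i, rfl⟩ := hσ_gen q
    rw [hF, hF, smul_div', ← mul_smul, ← mul_smul, (Commute.self_zpow σ i).eq]
  have hF_ne : F.range ≠ ⊥ := fun hbot =>
    div_ne_one.mpr hb (by rw [← hF, ← mem_bot, ← hbot]; exact ⟨b, rfl⟩)
  have hQp : IsPGroup p Q := .of_card (n := 1) (hQ.trans (pow_one p).symm)
  obtain ⟨_, ⟨y, rfl⟩, hFy, hfix⟩ := hQp.exists_ne_one_fixed_of_smul_mem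
    (hB.to_subgroup F.range) hF_ne (by rintro q _ ⟨c, rfl⟩; exact ⟨q • c, (hF_smul q c).symm⟩)
  have hσy : σ • y = F y * y := (div_mul_cancel _ _).symm
  have hzpow := zpow_smul_eq_zpow_mul_of_smul_eq (hfix σ) hσy
  refine ⟨F y, y, orderOf_eq_prime ?_ hFy, hfix, ?_⟩
  · have hσp : σ ^ p = 1 := hQ ▸ pow_card_eq_one'
    have := hzpow p
    rwa [zpow_natCast, zpow_natCast, hσp, one_smul, right_eq_mul] at this
  · ext z
    simp only [Set.mul_singleton, Set.mem_image, SetLike.mem_coe, mem_zpowers_iff, mem_orbit_iff]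
    constructor
    · rintro ⟨q, rfl⟩
      obtain ⟨i, rfl⟩ := hσ_gen q
      exact ⟨_, ⟨i, rfl⟩, (hzpow i).symm⟩
    · rintro ⟨_, ⟨i, rfl⟩, rfl⟩
      exact ⟨σ ^ i, hzpow i⟩

/-- Let `A = cyc(M,G)` be a cyclotomic S-ring over an abelian
`p`-group `G`, where `M ≤ Aut(G)` is a `p`-group (the basic sets of `A` are
the orbits of `M`). If some basic set (orbit) has size `p`, then some basic
set of `A` is a coset of a subgroup of order `p` contained in the thin
radical of `A` (the set of fixed points of `M`). -/
theorem sizep {p : ℕ} (hp : p.Prime) {G : Type*} [CommGroup G] [Fintype G]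
    (hG : IsPGroup p G) (M : Subgroup (MulAut G)) (hM : IsPGroup p M)
    (x : G) (hX : (MulAction.orbit M x).ncard = p) :
    ∃ (H : Subgroup G) (y : G),
      Nat.card H = p ∧ (∀ v ∈ H, ∀ m ∈ M, m v = v) ∧
      MulAction.orbit M y = (H : Set G) * {y} := by
  have := Fact.mk hp
  set K := stabilizer M x
  have hK : K.index = p := by rw [index_stabilizer, hX]
  have := hM.normal_of_index_eq_prime hp hK
  have hK_ne : K ≠ ⊤ := fun hK_top => hp.ne_one (by rw [← hK, hK_top, index_top])
  obtain ⟨σ, -, hσ⟩ := SetLike.exists_of_lt hK_ne.lt_top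
  obtain ⟨h, y, hh, hfix, horbit⟩ := exists_orbit_eq_zpowers_mul_of_card_eq_prime
    (Q := M ⧸ K) (B := FixedPoints.subgroup K G) hK (hG.to_subgroup _) (σ := σ)
    (b := ⟨x, fun κ => κ.2⟩) (fun hσx => hσ (congrArg Subtype.val hσx))
  refine ⟨zpowers (h : G), y, ?_, ?_, ?_⟩
  · rw [Nat.card_zpowers, orderOf_coe, hh]
  · rintro _ ⟨i, rfl⟩ m hm
    simp only [map_zpow]
    congr 1
    exact congrArg Subtype.val (hfix (⟨m, hm⟩ : M))
  · rw [orbit_coe_eq_image_orbit_quotient, horbit, ← coe_subtype, Set.image_mul, ← coe_map,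
      MonoidHom.map_zpowers, Set.image_singleton]
end

section
/- Let p be an odd prime, G an abelian p-group, M an abelian p-subgroup of Aut(G), and A = cyc(M,G) normal. If X is a basic set of A with |G : ⟨X⟩| ≤ p, then X is a faithful regular orbit of M, i.e. M acts regularly and faithfully on X. -/
section
variable {p : ℕ} {G : Type*} [CommGroup G] [Fintype G]

lemma faith_key (hp : p.Prime) (hodd : p ≠ 2) (hG : IsPGroup p G)
    (M : Subgroup (MulAut G)) (hM : IsPGroup p M)
    (hMcomm : ∀ a b : M, a * b = b * a)
    (hnorm : ∀ f : Equiv.Perm G,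
      (∀ x y : G, MulAction.orbit M (y * x⁻¹) =
        MulAction.orbit M (f y * (f x)⁻¹)) → IsHolPerm f)
    (x : G)
    (hidx : (Subgroup.closure (MulAction.orbit M x)).index ≤ p)
    (m : M) (hmx : m • x = x) : m = 1 := by
  haveI : Fact p.Prime := ⟨hp⟩
  set H := Subgroup.closure (MulAction.orbit M x) with hH
  set φ : MulAut G := (m : MulAut G) with hφ
  have hmx' : φ x = x := hmx
  -- m fixes H pointwise
  have hfix : ∀ u ∈ H, φ u = u := by
    have hsub : MulAction.orbit M x ⊆ (MonoidHom.eqLocus φ.toMonoidHom (MonoidHom.id G) : Set G) := by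
      rintro y ⟨n, rfl⟩
      show φ (n • x) = n • x
      have : φ (n • x) = ((m * n : M) : MulAut G) x := rfl
      rw [this, hMcomm m n]
      show (n : MulAut G) (φ x) = (n : MulAut G) x
      rw [hmx']
    have := (Subgroup.closure_le _).mpr hsub
    intro u hu
    exact this hu
  -- conclude m = 1 from pointwise triviality
  have conclude : (∀ u : G, φ u = u) → m = 1 := by
    intro h
    refine Subtype.ext (MulEquiv.ext fun u => ?_)
    exact h u
  -- index is 1 or p
  have hne : H.index ≠ 0 := Subgroup.index_ne_zero_of_finite
  obtain ⟨e, hcard⟩ := (IsPGroup.iff_card).mp hG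
  have hdvd : H.index ∣ p ^ e := by
    have := Subgroup.index_dvd_card (G := G) (H := H)
    rwa [hcard] at this
  obtain ⟨s, hs, hsidx⟩ := (Nat.dvd_prime_pow hp).mp hdvd
  rcases Nat.lt_or_ge s 1 with hs1 | hs1
  · -- index = 1, H = ⊤
    interval_cases s
    have : H = ⊤ := Subgroup.index_eq_one.mp (by simpa using hsidx)
    exact conclude fun u => hfix u (this ▸ Subgroup.mem_top u)
  · -- index = p
    have hip : H.index = p := by
      rcases Nat.lt_or_ge s 2 with h2 | h2
      · interval_cases s; simpa using hsidx
      · exfalso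
        have : p ^ 2 ≤ p ^ s := Nat.pow_le_pow_right hp.pos h2
        have : p ^ 2 ≤ p := le_trans this (hsidx ▸ hidx)
        nlinarith [hp.two_le]
    -- pick g ∉ H
    have hHne : H ≠ ⊤ := by
      intro h
      have h1 : (1:ℕ) = p := by simpa [h] using hip
      exact hp.one_lt.ne' h1.symm
    obtain ⟨g, hg⟩ : ∃ g, g ∉ H := by
      by_contra h
      push_neg at h
      exact hHne ((Subgroup.eq_top_iff' (H := H)).mpr h)
    set q : G →* G ⧸ H := QuotientGroup.mk' H with hq
    have hcardQ : Nat.card (G ⧸ H) = p := hip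
    have hq1 : q g ≠ 1 := by
      rw [hq, QuotientGroup.mk'_apply, ne_eq, QuotientGroup.eq_one_iff]
      exact hg
    have horder : orderOf (q g) = p :=
      orderOf_eq_prime (by rw [← hcardQ]; exact pow_card_eq_one') hq1
    have hzp : Subgroup.zpowers (q g) = ⊤ :=
      Subgroup.eq_top_of_card_eq _ (by rw [Nat.card_zpowers, horder, hcardQ])
    have hexp : ∀ u : G, ∃ i : ℤ, q u = (q g) ^ i := by
      intro u
      have : q u ∈ Subgroup.zpowers (q g) := hzp ▸ Subgroup.mem_top _
      obtain ⟨i, hi⟩ := Subgroup.mem_zpowers_iff.mp this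
      exact ⟨i, hi.symm⟩
    -- the class of m g
    obtain ⟨c, hc⟩ := hexp (φ g)
    have claimU : ∀ u : G, q (φ u) = (q u) ^ c := by
      intro u
      obtain ⟨i, hi⟩ := hexp u
      have hmem : u * g ^ (-i) ∈ H := by
        refine (QuotientGroup.eq_one_iff _).mp ?_
        show q (u * g ^ (-i)) = 1
        rw [map_mul, map_zpow, hi, ← zpow_add, add_neg_cancel, zpow_zero]
      have h2 : φ u = (u * g ^ (-i)) * (φ g) ^ i := by
        have : u = (u * g ^ (-i)) * g ^ i := by
          rw [mul_assoc, zpow_neg, inv_mul_cancel, mul_one]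
        calc φ u = φ ((u * g ^ (-i)) * g ^ i) := by rw [← this]
          _ = φ (u * g ^ (-i)) * (φ g) ^ i := by rw [map_mul, map_zpow]
          _ = (u * g ^ (-i)) * (φ g) ^ i := by rw [hfix _ hmem]
      rw [h2, map_mul, map_zpow, hc]
      have hqm : q (u * g ^ (-i)) = 1 := by
        show ((u * g ^ (-i) : G) : G ⧸ H) = 1
        exact (QuotientGroup.eq_one_iff _).mpr hmem
      rw [hqm, one_mul, ← zpow_mul, hi, ← zpow_mul, mul_comm c i]
    have claim2 : ∀ (t : ℕ) (u : G), q (((m ^ t : M) : MulAut G) u) = (q u) ^ (c ^ t) := by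
      intro t
      induction t with
      | zero => intro u; simp
      | succ t ih =>
        intro u
        have h1 : ((m ^ (t+1) : M) : MulAut G) u = φ (((m ^ t : M) : MulAut G) u) := by
          rw [pow_succ']
          rfl
        rw [h1, claimU, ih, ← zpow_mul, pow_succ]
    -- Fermat: c ≡ 1 mod p
    obtain ⟨j, hmj⟩ := hM m
    have hfer : ((p : ℤ)) ∣ c - 1 := by
      have h1 : (q g) ^ (c ^ (p ^ j)) = q g := by
        have := claim2 (p ^ j) g
        rw [hmj] at this
        simpa using this.symm
      have h2 : (q g) ^ (c ^ (p ^ j) - 1) = 1 := by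
        rw [zpow_sub, h1, zpow_one, mul_inv_cancel]
      have h3 : ((p : ℤ)) ∣ c ^ (p ^ j) - 1 := by
        have := orderOf_dvd_iff_zpow_eq_one.mpr h2
        rwa [horder] at this
      have h4 : ((c : ZMod p)) ^ (p ^ j) = 1 := by
        have := (ZMod.intCast_zmod_eq_zero_iff_dvd _ p).mpr h3
        push_cast at this
        linear_combination this
      have h5 : ∀ t : ℕ, ((c : ZMod p)) ^ (p ^ t) = (c : ZMod p) := by
        intro t
        induction t with
        | zero => simp
        | succ t ih => rw [pow_succ, pow_mul, ih, ZMod.pow_card]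
      have h6 : ((c : ZMod p)) = 1 := by rw [← h5 j, h4]
      have : (((c - 1 : ℤ)) : ZMod p) = 0 := by push_cast [h6]; ring
      exact (ZMod.intCast_zmod_eq_zero_iff_dvd _ p).mp this
    have hqmg : q (φ g) = q g := by
      rw [hc]
      have : (q g) ^ (c - 1) = 1 :=
        orderOf_dvd_iff_zpow_eq_one.mp (horder ▸ hfer)
      calc (q g) ^ c = (q g) ^ (c - 1) * (q g) ^ (1:ℤ) := by rw [← zpow_add]; ring_nf
        _ = q g := by rw [this, one_mul, zpow_one]
    -- h₀
    set h₀ : G := φ g * g⁻¹ with hh₀def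
    have hh0 : h₀ ∈ H := by
      refine (QuotientGroup.eq_one_iff _).mp ?_
      show q (φ g * g⁻¹) = 1
      rw [map_mul, map_inv, hqmg, mul_inv_cancel]
    have hφg : φ g = g * h₀ := by
      rw [hh₀def, mul_comm g, mul_assoc, inv_mul_cancel, mul_one]
    have hqh0 : q h₀ = 1 := by
      show ((h₀ : G) : G ⧸ H) = 1
      exact (QuotientGroup.eq_one_iff _).mpr hh0
    -- L1
    have L1 : ∀ (u : G) (i : ℤ), q u = (q g) ^ i → φ u = u * h₀ ^ i := by
      intro u i hi
      have hmem : u * g ^ (-i) ∈ H := by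
        refine (QuotientGroup.eq_one_iff _).mp ?_
        show q (u * g ^ (-i)) = 1
        rw [map_mul, map_zpow, hi, ← zpow_add, add_neg_cancel, zpow_zero]
      have huu : u = (u * g ^ (-i)) * g ^ i := by
        rw [mul_assoc, zpow_neg, inv_mul_cancel, mul_one]
      calc φ u = φ ((u * g ^ (-i)) * g ^ i) := by rw [← huu]
        _ = φ (u * g ^ (-i)) * (φ g) ^ i := by rw [map_mul, map_zpow]
        _ = (u * g ^ (-i)) * (g * h₀) ^ i := by rw [hfix _ hmem, hφg]
        _ = u * h₀ ^ i := by
            rw [mul_zpow, ← mul_assoc, mul_assoc u, zpow_neg, inv_mul_cancel, mul_one]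
    -- L2
    have L2 : ∀ (u : G) (i : ℤ), q u = (q g) ^ i →
        ∀ k : ℕ, ((m ^ k : M) : MulAut G) u = u * h₀ ^ (i * k) := by
      intro u i hi k
      induction k with
      | zero => simp
      | succ k ih =>
        have h1 : ((m ^ (k+1) : M) : MulAut G) u = φ (((m ^ k : M) : MulAut G) u) := by
          rw [pow_succ']; rfl
        have hqk : q (((m ^ k : M) : MulAut G) u) = (q g) ^ i := by
          rw [ih, map_mul, map_zpow, hqh0, one_zpow, mul_one, hi]
        rw [h1, L1 _ i hqk, ih, mul_assoc, ← zpow_add]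
        congr 1
        push_cast
        ring
    -- p-power annihilating h₀
    obtain ⟨K, hK⟩ := hG h₀
    have hNz : h₀ ^ (((p:ℤ)) ^ K) = 1 := by
      have hcast : (((p:ℤ)) ^ K) = ((p ^ K : ℕ) : ℤ) := by push_cast; ring
      rw [hcast, zpow_natCast, hK]
    have zeq : ∀ a b : ℤ, ((p:ℤ)) ^ K ∣ a - b → h₀ ^ a = h₀ ^ b := by
      rintro a b ⟨t, ht⟩
      have h1 : h₀ ^ (a - b) = 1 := by
        rw [ht, zpow_mul, hNz, one_zpow]
      rw [zpow_sub] at h1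
      exact mul_inv_eq_one.mp h1
    -- solving linear congruences
    have solve : ∀ d ε : ℤ, ¬ ((p:ℤ) ∣ d) → ∃ k : ℕ, ((p:ℤ)) ^ K ∣ d * k - ε := by
      intro d ε hd
      have hprime : Prime ((p:ℤ)) := by rw [Int.prime_iff_natAbs_prime]; simpa using hp
      have hcop : IsCoprime d (((p:ℤ)) ^ K) :=
        ((hprime.coprime_iff_not_dvd.mpr hd).symm).pow_right
      obtain ⟨a, b, hab⟩ := hcop
      set N : ℤ := ((p:ℤ)) ^ K with hN
      have hNpos : 0 < N := by
        have : (0:ℤ) < p := by exact_mod_cast hp.pos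
        positivity
      refine ⟨(a * ε % N).toNat, ?_⟩
      have h1 : (((a * ε % N).toNat : ℤ)) = a * ε % N := Int.toNat_of_nonneg (Int.emod_nonneg _ hNpos.ne')
      rw [h1, Int.emod_def]
      refine ⟨(-b) * ε - d * (a * ε / N), ?_⟩
      linear_combination ε * hab
    -- the permutation
    classical
    set f : G → G := fun u => if q u = q g then φ u else u with hf
    have hfin : ∀ u : G, q u = q g → f u = u * h₀ := by
      intro u hu
      have := L1 u 1 (by rw [hu, zpow_one])
      simpa [hf, hu] using this
    have hfout : ∀ u : G, ¬ (q u = q g) → f u = u := by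
      intro u hu; simp [hf, hu]
    have hqf : ∀ u : G, q (f u) = q u := by
      intro u
      by_cases hu : q u = q g
      · rw [hfin u hu, map_mul, hqh0, mul_one]
      · rw [hfout u hu]
    have hinj : Function.Injective f := by
      intro u v huv
      have hquv : q u = q v := by rw [← hqf u, ← hqf v, huv]
      by_cases hu : q u = q g
      · have hv : q v = q g := hquv ▸ hu
        rw [hfin u hu, hfin v hv] at huv
        exact mul_right_cancel huv
      · have hv : ¬ (q v = q g) := fun h => hu (hquv ▸ h)
        rw [hfout u hu, hfout v hv] at huv
        exact huv
    set F : Equiv.Perm G := Equiv.ofBijective f (Finite.injective_iff_bijective.mp hinj) with hF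
    have hFapp : ∀ u : G, F u = f u := fun u => rfl
    -- orbit preservation
    have horb : ∀ u v : G, MulAction.orbit M (v * u⁻¹) = MulAction.orbit M (F v * (F u)⁻¹) := by
      intro u v
      suffices hex : ∃ n : M, n • (v * u⁻¹) = F v * (F u)⁻¹ by
        obtain ⟨n, hn⟩ := hex
        exact (MulAction.orbit_eq_iff.mpr (MulAction.mem_orbit_iff.mpr ⟨n, hn⟩)).symm
      rw [hFapp, hFapp]
      by_cases hu : q u = q g <;> by_cases hv : q v = q g
      · -- both in the coset
        refine ⟨1, ?_⟩
        show ((1 : M) : MulAut G) (v * u⁻¹) = f v * (f u)⁻¹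
        rw [hfin u hu, hfin v hv, mul_inv, mul_mul_mul_comm, mul_inv_cancel, mul_one]
        rfl
      · -- u in, v out
        obtain ⟨jj, hjj⟩ := hexp v
        have hw : q (v * u⁻¹) = (q g) ^ (jj - 1) := by
          rw [map_mul, map_inv, hjj, hu, zpow_sub, zpow_one]
        have hpd : ¬ ((p:ℤ) ∣ (jj - 1)) := by
          intro hdvd
          have h1 : (q g) ^ (jj - 1) = 1 :=
            orderOf_dvd_iff_zpow_eq_one.mp (by rw [horder]; exact hdvd)
          rw [zpow_sub, zpow_one] at h1
          exact hv (by rw [hjj]; exact mul_inv_eq_one.mp h1)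
        obtain ⟨k, hk⟩ := solve (jj - 1) (-1) hpd
        refine ⟨m ^ k, ?_⟩
        show ((m ^ k : M) : MulAut G) (v * u⁻¹) = f v * (f u)⁻¹
        rw [L2 _ (jj - 1) hw k, hfout v hv, hfin u hu, zeq _ _ hk]
        rw [zpow_neg_one, mul_inv u h₀, ← mul_assoc]
      · -- v in, u out
        obtain ⟨ii, hii⟩ := hexp u
        have hw : q (v * u⁻¹) = (q g) ^ (1 - ii) := by
          rw [map_mul, map_inv, hii, hv, zpow_sub, zpow_one]
        have hpd : ¬ ((p:ℤ) ∣ (1 - ii)) := by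
          intro hdvd
          have h1 : (q g) ^ (1 - ii) = 1 :=
            orderOf_dvd_iff_zpow_eq_one.mp (by rw [horder]; exact hdvd)
          rw [zpow_sub, zpow_one] at h1
          exact hu (hii.trans (mul_inv_eq_one.mp h1).symm)
        obtain ⟨k, hk⟩ := solve (1 - ii) 1 hpd
        refine ⟨m ^ k, ?_⟩
        show ((m ^ k : M) : MulAut G) (v * u⁻¹) = f v * (f u)⁻¹
        rw [L2 _ (1 - ii) hw k, hfin v hv, hfout u hu, zeq _ _ hk, zpow_one]
        exact mul_right_comm v u⁻¹ h₀
      · -- both out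
        refine ⟨1, ?_⟩
        show ((1 : M) : MulAut G) (v * u⁻¹) = f v * (f u)⁻¹
        rw [hfout v hv, hfout u hu]
        rfl
    -- apply normality
    obtain ⟨σ, a, hσ⟩ := hnorm F horb
    have hq2 : ¬ (q (1 : G) = q g) := by
      rw [map_one]; exact fun h => hq1 h.symm
    have ha : a = 1 := by
      have h1 : F 1 = 1 := by rw [hFapp, hfout _ hq2]
      have h2 := hσ 1
      rw [h1, map_one, one_mul] at h2
      exact h2.symm
    have hσg : σ g = g * h₀ := by
      have h3 := hσ g
      rw [ha, mul_one, hFapp, hfin g rfl] at h3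
      exact h3.symm
    have hqgg : ¬ (q (g * g) = q g) := by
      intro h
      rw [map_mul] at h
      exact hq1 (mul_right_cancel (h.trans (one_mul (q g)).symm))
    have hh2 : h₀ * h₀ = 1 := by
      have h1 := hσ (g * g)
      rw [ha, mul_one, hFapp, hfout _ hqgg, map_mul, hσg] at h1
      have h4 : g * g * (h₀ * h₀) = g * g * 1 := by
        rw [mul_one, ← mul_mul_mul_comm]
        exact h1.symm
      exact mul_left_cancel h4
    -- h₀ = 1 since p odd
    have hh1 : h₀ = 1 := by
      have hd2 : orderOf h₀ ∣ 2 := orderOf_dvd_of_pow_eq_one (by rw [pow_two]; exact hh2)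
      have hdp : orderOf h₀ ∣ p ^ K := orderOf_dvd_of_pow_eq_one hK
      have hcop : Nat.Coprime 2 (p ^ K) :=
        Nat.Coprime.pow_right K ((Nat.coprime_primes Nat.prime_two hp).mpr (Ne.symm hodd))
      have hgcd := Nat.dvd_gcd hd2 hdp
      rw [Nat.Coprime] at hcop
      rw [hcop] at hgcd
      exact orderOf_eq_one_iff.mp (Nat.dvd_one.mp hgcd)
    refine conclude fun u => ?_
    obtain ⟨i, hi⟩ := hexp u
    rw [L1 u i hi, hh1, one_zpow, mul_one]

end

/-- Let `p` be an odd prime, `G` an abelian `p`-group, `M` an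
abelian `p`-subgroup of `Aut(G)`, and suppose the cyclotomic S-ring
`A = cyc(M,G)` (whose basic sets are the `M`-orbits) is normal, i.e. every
combinatorial automorphism of `A` lies in `Hol(G)`. If `X` is a basic set
(orbit) with `|G : ⟨X⟩| ≤ p`, then `X` is a faithful regular orbit of `M`. -/
theorem faith {p : ℕ} (hp : p.Prime) (hodd : p ≠ 2)
    {G : Type*} [CommGroup G] [Fintype G] (hG : IsPGroup p G)
    (M : Subgroup (MulAut G)) (hM : IsPGroup p M)
    (hMcomm : ∀ a b : M, a * b = b * a)
    (hnorm : ∀ f : Equiv.Perm G,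
      (∀ x y : G, MulAction.orbit M (y * x⁻¹) =
        MulAction.orbit M (f y * (f x)⁻¹)) → IsHolPerm f)
    (x : G)
    (hidx : (Subgroup.closure (MulAction.orbit M x)).index ≤ p) :
    (∀ y ∈ MulAction.orbit M x, ∃! m : M, m • x = y) ∧
    (∀ m : M, (∀ y ∈ MulAction.orbit M x, m • y = y) → m = 1) := by
  have key : ∀ m : M, m • x = x → m = 1 :=
    faith_key hp hodd hG M hM hMcomm hnorm x hidx
  constructor
  · intro y hy
    obtain ⟨n, hn⟩ := MulAction.mem_orbit_iff.mp hy
    refine ⟨n, hn, ?_⟩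
    intro n' hn'
    have h1 : (n⁻¹ * n') • x = x := by
      rw [mul_smul, hn', ← hn, inv_smul_smul]
    have h2 : n⁻¹ * n' = 1 := key _ h1
    exact (inv_mul_eq_one.mp h2).symm
  · intro m hm
    exact key m (hm x (MulAction.mem_orbit_self x))
end

section
/- Let A be an S-ring over a finite abelian group G of order n. Suppose that for every prime p dividing n, the Sylow p-subgroup G_p of G is an A-subgroup and A_{G_p} is a p-S-ring. Then A is the tensor product over all p ∈ π(n) of the S-rings A_{G_p}, i.e. every basic set X of A satisfies X = ∏_p X_{G_p} where X_{G_p} is the projection of X to G_p. -/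
/-!
Fix a basic set `X` and, for each prime `p ∣ |G|`, the projection `π_p : g ↦ pPart p g` onto
the Sylow `p`-subgroup. Its image is that Sylow subgroup and its kernel is the product of the
other Sylow subgroups, so both are `A`-sets: structure constants are additive, hence products of
`A`-sets are `A`-sets. Then `π_p(X) = X·ker π_p ∩ im π_p` is an `A`-set lying in the basic set
that contains `π_p(x)` for any `x ∈ X`, so it is that basic set and `|π_p(X)|` is a power of `p`;
and the fibres `X ∩ x·ker π_p` of `π_p` on `X` all have the same size (an intersection number
of `A`), so `|π_p(X)|` divides `|X|`. These sizes are pairwise coprime, so `∏ₚ |π_p(X)| ≤ |X|`,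
while `X ⊆ {g | π_p g ∈ π_p(X) for all p} ⊆ ∏ₚ π_p(X)`. Counting forces equality.
-/

open scoped Pointwise

/-- The `p`-component of an element `g` of a finite group: `g ^ k` where
`k ≡ 1 (mod p^a)` and `k ≡ 0 (mod m)`, with `|G| = p^a·m`, `p ∤ m`. -/
noncomputable def pPart {G : Type*} [Group G] [Fintype G] (p : ℕ) (g : G) : G :=
  let n := Nat.card G
  let a := n.factorization p
  let m := n / p ^ a
  g ^ (m * ((m : ZMod (p ^ a))⁻¹).val)

open Set

noncomputable def mulCount {G : Type*} [Group G] (S T : Set G) (z : G) : ℕ :=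
  {q : G × G | q.1 ∈ S ∧ q.2 ∈ T ∧ q.1 * q.2 = z}.ncard

section MulCount

variable {G : Type*} [Group G] {S S₁ S₂ T T₁ T₂ : Set G}

@[simp]
lemma mulCount_empty_left (T : Set G) (z : G) : mulCount ∅ T z = 0 := by
  simp [mulCount]

@[simp]
lemma mulCount_empty_right (S : Set G) (z : G) : mulCount S ∅ z = 0 := by
  simp [mulCount]

lemma mulCount_ker {M : Type*} [Group M] (f : G →* M) (X : Set G) (z : G) :
    mulCount X f.ker z = {x ∈ X | f x = f z}.ncard := by
  refine ncard_congr (fun q _ => q.1) ?_ ?_ ?_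
  · rintro ⟨x, k⟩ ⟨hx, hk, rfl⟩
    exact ⟨hx, by simp [(MonoidHom.mem_ker).1 hk]⟩
  · rintro ⟨x, k⟩ ⟨x', k'⟩ ⟨-, -, hk⟩ ⟨-, -, hk'⟩ (rfl : x = x')
    simp only [Prod.mk.injEq, true_and]
    exact mul_left_cancel (hk.trans hk'.symm)
  · rintro x ⟨hx, hfx⟩
    refine ⟨(x, x⁻¹ * z), ⟨hx, ?_, mul_inv_cancel_left x z⟩, rfl⟩
    simp [MonoidHom.mem_ker, hfx]

variable [Finite G]

lemma mulCount_union_left (h : Disjoint S₁ S₂) (T : Set G) (z : G) :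
    mulCount (S₁ ∪ S₂) T z = mulCount S₁ T z + mulCount S₂ T z := by
  unfold mulCount
  rw [← ncard_union_eq]
  · congr 1
    ext q
    simp only [mem_union, mem_ofPred_eq]
    tauto
  · exact disjoint_left.2 fun q h₁ h₂ => disjoint_left.1 h h₁.1 h₂.1

lemma mulCount_union_right (h : Disjoint T₁ T₂) (S : Set G) (z : G) :
    mulCount S (T₁ ∪ T₂) z = mulCount S T₁ z + mulCount S T₂ z := by
  unfold mulCount
  rw [← ncard_union_eq]
  · congr 1
    ext q
    simp only [mem_union, mem_ofPred_eq]
    tauto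
  · exact disjoint_left.2 fun q h₁ h₂ => disjoint_left.1 h h₁.2.1 h₂.2.1

lemma mulCount_pos_iff {z : G} : 0 < mulCount S T z ↔ z ∈ S * T := by
  rw [mulCount, ncard_pos, mem_mul]
  constructor
  · rintro ⟨⟨a, b⟩, ha, hb, rfl⟩
    exact ⟨a, ha, b, hb, rfl⟩
  · rintro ⟨a, ha, b, hb, rfl⟩
    exact ⟨(a, b), ha, hb, rfl⟩

end MulCount

lemma Set.ncard_eq_ncard_image_mul {α β : Type*} [Finite α] {f : α → β} {s : Set α} {c : ℕ}
    (hc : ∀ x ∈ s, {y ∈ s | f y = f x}.ncard = c) : s.ncard = (f '' s).ncard * c := by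
  classical
  have : Fintype α := Fintype.ofFinite α
  rw [← coe_toFinset s, ← Finset.coe_image, ncard_coe_finset, ncard_coe_finset,
    Finset.card_eq_sum_card_image f, ← smul_eq_mul, ← Finset.sum_const]
  refine Finset.sum_congr rfl fun b hb => ?_
  obtain ⟨x, hx, rfl⟩ := Finset.mem_image.1 hb
  rw [← hc x (mem_toFinset.1 hx), ← ncard_coe_finset, Finset.coe_filter]
  simp

lemma Set.ncard_finset_prod_le {G ι : Type*} [CommGroup G] [Finite G] (F : Finset ι)
    (S : ι → Set G) : (∏ i ∈ F, S i).ncard ≤ ∏ i ∈ F, (S i).ncard := by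
  classical
  induction F using Finset.induction_on with
  | empty => simp [← singleton_one]
  | insert i F hi ih =>
    rw [Finset.prod_insert hi, Finset.prod_insert hi]
    exact (natCard_mul_le).trans (Nat.mul_le_mul_left _ ih)

namespace SRing

section ASet

variable {G : Type*} [Group G] (A : SRing G)

def IsASet (S : Set G) : Prop := ∀ X ∈ A.parts, (X ∩ S).Nonempty → X ⊆ S

variable {A} {S T X : Set G}

lemma isASet_of_mem_parts (hX : X ∈ A.parts) : A.IsASet X := by
  rintro Y hY ⟨g, hgY, hgX⟩
  rw [A.eq_of_mem Y hY X hX g hgY hgX]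

lemma isASet_one : A.IsASet 1 := by
  rintro X hX ⟨g, hgX, rfl⟩
  rw [A.eq_of_mem X hX _ A.one_mem 1 hgX rfl, singleton_one]

lemma IsASubgroup.isASet {H : Subgroup G} (h : A.IsASubgroup H) : A.IsASet H :=
  fun X hX ⟨g, hgX, hgH⟩ => h X hX g hgX hgH

lemma IsASet.inter (hS : A.IsASet S) (hT : A.IsASet T) : A.IsASet (S ∩ T) :=
  fun X hX ⟨g, hgX, hgS, hgT⟩ => subset_inter (hS X hX ⟨g, hgX, hgS⟩) (hT X hX ⟨g, hgX, hgT⟩)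

lemma IsASet.diff (hS : A.IsASet S) (hX : X ∈ A.parts) : A.IsASet (S \ X) := by
  rintro Y hY ⟨g, hgY, hgS, hgX⟩ y hy
  refine ⟨hS Y hY ⟨g, hgY, hgS⟩ hy, fun hyX => hgX ?_⟩
  rwa [A.eq_of_mem Y hY X hX y hy hyX] at hgY

variable [Finite G]

lemma IsASet.induction_on {motive : Set G → Prop} (empty : motive ∅)
    (union : ∀ X ∈ A.parts, ∀ S, A.IsASet S → Disjoint X S → motive S → motive (X ∪ S))
    (hS : A.IsASet S) : motive S := by
  induction h : S.ncard using Nat.strong_induction_on generalizing S with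
  | _ n ih =>
    obtain rfl | ⟨s, hs⟩ := S.eq_empty_or_nonempty
    · exact empty
    obtain ⟨X, hX, hsX⟩ := A.exists_mem s
    have hXS : X ⊆ S := hS X hX ⟨s, hsX, hs⟩
    rw [← union_sdiff_cancel hXS]
    refine union X hX _ (hS.diff hX) disjoint_sdiff_right (ih _ ?_ (hS.diff hX) rfl)
    rw [← h]
    exact ncard_lt_ncard (hXS.sdiff_ssubset_of_nonempty (A.nonempty_mem X hX))

lemma IsASet.mulCount_eq (hS : A.IsASet S) (hT : A.IsASet T) {Z : Set G} (hZ : Z ∈ A.parts)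
    {z₁ z₂ : G} (h₁ : z₁ ∈ Z) (h₂ : z₂ ∈ Z) : mulCount S T z₁ = mulCount S T z₂ := by
  have basic (Y : Set G) (hY : Y ∈ A.parts) : mulCount S Y z₁ = mulCount S Y z₂ := by
    refine hS.induction_on (motive := fun S => mulCount S Y z₁ = mulCount S Y z₂) (by simp)
      fun X hX S' _ hXS' ih => ?_
    have hXY : mulCount X Y z₁ = mulCount X Y z₂ := A.structConst X hX Y hY Z hZ z₁ h₁ z₂ h₂
    rw [mulCount_union_left hXS', mulCount_union_left hXS', ih, hXY]
  refine hT.induction_on (motive := fun T => mulCount S T z₁ = mulCount S T z₂) (by simp)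
    fun Y hY T' _ hYT' ih => ?_
  rw [mulCount_union_right hYT', mulCount_union_right hYT', ih, basic Y hY]

lemma IsASet.mul (hS : A.IsASet S) (hT : A.IsASet T) : A.IsASet (S * T) := by
  rintro X hX ⟨x₀, hx₀X, hx₀⟩ x hx
  rw [← mulCount_pos_iff, hS.mulCount_eq hT hX hx hx₀X, mulCount_pos_iff]
  exact hx₀

end ASet

lemma IsASet.finset_prod {G ι : Type*} [CommGroup G] [Finite G] {A : SRing G} {F : Finset ι}
    {S : ι → Set G} (hS : ∀ i ∈ F, A.IsASet (S i)) : A.IsASet (∏ i ∈ F, S i) :=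
  Finset.prod_induction S A.IsASet (fun _ _ => IsASet.mul) isASet_one hS

section Projection

variable {G : Type*} [Group G] [Finite G] {A : SRing G} {X : Set G}

/-- The fibres of `f` on a basic set `X` are the sets `X ∩ x ker f`, whose sizes are
structure constants of `A` at points of `X`, hence all equal. -/
lemma ncard_image_dvd {M : Type*} [Group M] {f : G →* M} (hK : A.IsASet f.ker)
    (hX : X ∈ A.parts) : (f '' X).ncard ∣ X.ncard := by
  obtain ⟨x₀, hx₀⟩ := A.nonempty_mem X hX
  refine Dvd.intro _ (ncard_eq_ncard_image_mul (c := mulCount X f.ker x₀) fun x hx => ?_).symm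
  rw [← mulCount_ker, (isASet_of_mem_parts hX).mulCount_eq hK hX hx hx₀]

lemma image_mem_parts {f : G →* G} (hf : ∀ g, f (f g) = f g) (hK : A.IsASet f.ker)
    (hR : A.IsASet f.range) (hX : X ∈ A.parts) : f '' X ∈ A.parts := by
  have hker (g : G) : (f g)⁻¹ * g ∈ f.ker := by simp [hf]
  have hfix {y : G} (hy : y ∈ f.range) : f y = y := by
    obtain ⟨g, rfl⟩ := hy
    exact hf g
  obtain ⟨x₀, hx₀⟩ := A.nonempty_mem X hX
  obtain ⟨Y, hY, hx₀Y⟩ := A.exists_mem (f x₀)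
  have hYR : Y ⊆ f.range := hR Y hY ⟨f x₀, hx₀Y, x₀, rfl⟩
  have himage : f '' X = X * f.ker ∩ f.range := by
    ext z
    constructor
    · rintro ⟨x, hx, rfl⟩
      refine ⟨⟨x, hx, _, f.ker.inv_mem (hker x), ?_⟩, x, rfl⟩
      simp
    · rintro ⟨⟨x, hx, k, hk, rfl⟩, hxk⟩
      refine ⟨x, hx, ?_⟩
      rw [← hfix hxk, map_mul, (MonoidHom.mem_ker).1 hk, mul_one]
  have hXY : X ⊆ Y * f.ker :=
    (isASet_of_mem_parts hY).mul hK X hX ⟨x₀, hx₀, f x₀, hx₀Y, _, hker x₀, mul_inv_cancel_left _ _⟩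
  have hYX : Y ⊆ f '' X := by
    rw [himage]
    exact ((isASet_of_mem_parts hX).mul hK).inter hR Y hY
      ⟨f x₀, hx₀Y, himage ▸ mem_image_of_mem f hx₀⟩
  have hXY' : f '' X ⊆ Y := by
    rintro _ ⟨x, hx, rfl⟩
    obtain ⟨y, hy, k, hk, rfl⟩ := hXY hx
    rwa [map_mul, (MonoidHom.mem_ker).1 hk, mul_one, hfix (hYR hy)]
  rwa [hXY'.antisymm hYX]

end Projection

end SRing

lemma Nat.modEq_of_forall_modEq_ordProj {n a b : ℕ} (hn : n ≠ 0)
    (h : ∀ p ∈ n.primeFactors, a ≡ b [MOD ordProj[p] n]) : a ≡ b [MOD n] := by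
  simp only [Nat.modEq_iff_dvd] at h ⊢
  rw [← Nat.prod_factorization_pow_eq_self hn]
  push_cast at h ⊢
  refine Finset.prod_dvd_of_coprime (fun p hp q hq hpq => ?_) h
  exact Nat.isCoprime_iff_coprime.2 (Nat.coprime_pow_primes _ _
    (Nat.prime_of_mem_primeFactors hp) (Nat.prime_of_mem_primeFactors hq) hpq)

noncomputable def pPartExponent (n p : ℕ) : ℕ :=
  ordCompl[p] n * ((ordCompl[p] n : ZMod (ordProj[p] n))⁻¹).val

section PPartExponent

variable {n p q : ℕ}

lemma pPartExponent_modEq_one (hp : p.Prime) (hn : n ≠ 0) :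
    pPartExponent n p ≡ 1 [MOD ordProj[p] n] := by
  have : NeZero (ordProj[p] n) := ⟨pow_ne_zero _ hp.ne_zero⟩
  have hcop : (ordCompl[p] n).Coprime (ordProj[p] n) :=
    (Nat.coprime_ordCompl hp hn).symm.pow_right _
  rw [← ZMod.natCast_eq_natCast_iff, pPartExponent, Nat.cast_mul, ZMod.natCast_zmod_val,
    ZMod.coe_mul_inv_eq_one _ hcop, Nat.cast_one]

lemma ordCompl_dvd_pPartExponent (n p : ℕ) : ordCompl[p] n ∣ pPartExponent n p :=
  dvd_mul_right _ _

lemma ordProj_dvd_pPartExponent (hp : p.Prime) (hq : q.Prime) (hqp : q ≠ p) :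
    ordProj[q] n ∣ pPartExponent n p := by
  refine (Nat.dvd_ordCompl_of_dvd_not_dvd (Nat.ordProj_dvd n q) fun h => hqp ?_).trans
    (ordCompl_dvd_pPartExponent n p)
  exact ((Nat.prime_dvd_prime_iff_eq hp hq).1 (hp.dvd_of_dvd_pow h)).symm

lemma dvd_pPartExponent_mul_ordProj (n p : ℕ) : n ∣ pPartExponent n p * ordProj[p] n := by
  conv_lhs => rw [← Nat.ordProj_mul_ordCompl_eq_self n p, mul_comm]
  exact mul_dvd_mul_right (ordCompl_dvd_pPartExponent n p) _

lemma dvd_pPartExponent_mul_pPartExponent (hp : p.Prime) (hq : q.Prime) (hpq : p ≠ q) :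
    n ∣ pPartExponent n p * pPartExponent n q := by
  conv_lhs => rw [← Nat.ordProj_mul_ordCompl_eq_self n p, mul_comm]
  exact mul_dvd_mul (ordCompl_dvd_pPartExponent n p) (ordProj_dvd_pPartExponent hq hp hpq)

lemma sum_pPartExponent_modEq_one (hn : n ≠ 0) :
    ∑ p ∈ n.primeFactors, pPartExponent n p ≡ 1 [MOD n] := by
  refine Nat.modEq_of_forall_modEq_ordProj hn fun q hq => ?_
  have hq' := Nat.prime_of_mem_primeFactors hq
  rw [← Finset.add_sum_erase _ _ hq, ← add_zero 1]
  refine (pPartExponent_modEq_one hq' hn).add (Nat.modEq_zero_iff_dvd.2 (Finset.dvd_sum ?_))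
  intro p hp
  exact ordProj_dvd_pPartExponent (Nat.prime_of_mem_primeFactors (Finset.mem_of_mem_erase hp))
    hq' (Finset.ne_of_mem_erase hp).symm

end PPartExponent

lemma pow_eq_one_of_natCard_dvd {G : Type*} [Group G] {k : ℕ} (h : Nat.card G ∣ k) (g : G) :
    g ^ k = 1 :=
  orderOf_dvd_iff_pow_eq_one.1 ((orderOf_dvd_natCard g).trans h)

section PPart

variable {G : Type*} [CommGroup G] [Fintype G] {p q : ℕ}

lemma pPart_eq_pow (p : ℕ) (g : G) : pPart p g = g ^ pPartExponent (Nat.card G) p := rfl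

variable (G) in
noncomputable def pPartHom (p : ℕ) : G →* G := powMonoidHom (pPartExponent (Nat.card G) p)

@[simp]
lemma coe_pPartHom (p : ℕ) : ⇑(pPartHom G p) = pPart p := rfl

lemma pPart_pow_ordProj (p : ℕ) (g : G) : pPart p g ^ ordProj[p] (Nat.card G) = 1 := by
  rw [pPart_eq_pow, ← pow_mul]
  exact pow_eq_one_of_natCard_dvd (dvd_pPartExponent_mul_ordProj _ p) g

lemma pPart_pPart_of_ne (hp : p.Prime) (hq : q.Prime) (hpq : p ≠ q) (g : G) :
    pPart p (pPart q g) = 1 := by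
  rw [pPart_eq_pow, pPart_eq_pow, ← pow_mul]
  exact pow_eq_one_of_natCard_dvd (dvd_pPartExponent_mul_pPartExponent hq hp hpq.symm) g

lemma pPart_eq_self_of_mem_sylow (hp : p.Prime) (P : Sylow p G) {y : G} (hy : y ∈ P) :
    pPart p y = y := by
  have : Fact p.Prime := ⟨hp⟩
  have hord : orderOf y ∣ ordProj[p] (Nat.card G) := by
    rw [← P.card_eq_multiplicity]
    exact Subgroup.orderOf_dvd_natCard _ hy
  rw [pPart_eq_pow, pow_eq_pow_iff_modEq.2
    ((pPartExponent_modEq_one hp Nat.card_pos.ne').of_dvd hord), pow_one]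

lemma prod_pPart (g : G) : ∏ p ∈ (Nat.card G).primeFactors, pPart p g = g := by
  simp only [pPart_eq_pow]
  rw [Finset.prod_pow_eq_pow_sum, ← pow_mod_natCard,
    sum_pPartExponent_modEq_one Nat.card_pos.ne', pow_mod_natCard, pow_one]

lemma range_pPartHom (hp : p.Prime) (P : Sylow p G) : (pPartHom G p).range = P := by
  refine le_antisymm (IsPGroup.le_sylow_of_normal ?_ P) fun y hy =>
    ⟨y, pPart_eq_self_of_mem_sylow hp P hy⟩
  rintro ⟨_, g, rfl⟩
  exact ⟨_, Subtype.ext (pPart_pow_ordProj p g)⟩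

lemma pPart_pPart (hp : p.Prime) (g : G) : pPart p (pPart p g) = pPart p g := by
  have : Fact p.Prime := ⟨hp⟩
  obtain ⟨P⟩ : Nonempty (Sylow p G) := inferInstance
  have hg : pPart p g ∈ (pPartHom G p).range := ⟨g, rfl⟩
  rw [range_pPartHom hp P] at hg
  exact pPart_eq_self_of_mem_sylow hp P hg

lemma coe_ker_pPartHom (hp : p.Prime) :
    ((pPartHom G p).ker : Set G) =
      ∏ q ∈ (Nat.card G).primeFactors.erase p, ((pPartHom G q).range : Set G) := by
  classical
  apply Subset.antisymm
  · intro g hg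
    rw [← prod_pPart g, ← Finset.prod_erase _ (f := (pPart · g)) (show pPart p g = 1 from hg)]
    exact Set.finsetProd_mem_finsetProd _ _ _ fun q _ => ⟨g, rfl⟩
  · refine Finset.prod_induction _ (· ⊆ ((pPartHom G p).ker : Set G)) ?_ ?_ ?_
    · rintro S T hS hT _ ⟨s, hs, t, ht, rfl⟩
      exact mul_mem (hS hs) (hT ht)
    · simp
    · rintro q hq _ ⟨g, rfl⟩
      exact pPart_pPart_of_ne hp (Nat.prime_of_mem_primeFactors (Finset.mem_of_mem_erase hq))
        (Finset.ne_of_mem_erase hq).symm g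

lemma setOf_forall_pPart_mem_image_subset_prod {X : Set G} :
    {g : G | ∀ p : ℕ, p.Prime → ∃ x ∈ X, pPart p g = pPart p x} ⊆
      ∏ p ∈ (Nat.card G).primeFactors, pPart p '' X := by
  intro g hg
  rw [← prod_pPart g]
  refine finsetProd_mem_finsetProd _ _ _ fun p hp => ?_
  obtain ⟨x, hx, hgx⟩ := hg p (Nat.prime_of_mem_primeFactors hp)
  exact ⟨x, hx, hgx.symm⟩

end PPart

namespace SRing

variable {G : Type*} [CommGroup G] [Fintype G] {A : SRing G} {p : ℕ} {X : Set G}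

lemma isASet_range_pPartHom (hp : p.Prime) (hA : ∀ P : Sylow p G, A.IsASubgroup P) :
    A.IsASet (pPartHom G p).range := by
  have : Fact p.Prime := ⟨hp⟩
  obtain ⟨P⟩ : Nonempty (Sylow p G) := inferInstance
  rw [range_pPartHom hp P]
  exact (hA P).isASet

lemma isASet_ker_pPartHom (hp : p.Prime)
    (hA : ∀ q, q.Prime → ∀ Q : Sylow q G, A.IsASubgroup Q) : A.IsASet (pPartHom G p).ker := by
  rw [coe_ker_pPartHom hp]
  refine IsASet.finset_prod fun q hq => ?_
  have hq' := Nat.prime_of_mem_primeFactors (Finset.mem_of_mem_erase hq)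
  exact isASet_range_pPartHom hq' (hA q hq')

lemma image_pPart_mem_parts (hp : p.Prime)
    (hA : ∀ q, q.Prime → ∀ Q : Sylow q G, A.IsASubgroup Q) (hX : X ∈ A.parts) :
    pPart p '' X ∈ A.parts := by
  rw [← coe_pPartHom]
  exact image_mem_parts (pPart_pPart hp) (isASet_ker_pPartHom hp hA)
    (isASet_range_pPartHom hp (hA p hp)) hX

lemma ncard_image_pPart_dvd (hp : p.Prime)
    (hA : ∀ q, q.Prime → ∀ Q : Sylow q G, A.IsASubgroup Q) (hX : X ∈ A.parts) :
    (pPart p '' X).ncard ∣ X.ncard := by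
  rw [← coe_pPartHom]
  exact ncard_image_dvd (isASet_ker_pPartHom hp hA) hX


lemma prod_ncard_image_pPart_dvd
    (hSyl : ∀ (q : ℕ), q.Prime → ∀ Q : Sylow q G,
      A.IsASubgroup Q.toSubgroup ∧
      ∀ Y ∈ A.parts, Y ⊆ (Q.toSubgroup : Set G) → ∃ k : ℕ, Y.ncard = q ^ k)
    (hX : X ∈ A.parts) :
    ∏ p ∈ (Nat.card G).primeFactors, (pPart p '' X).ncard ∣ X.ncard := by
  have hA q hq (Q : Sylow q G) : A.IsASubgroup Q := (hSyl q hq Q).1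
  refine Finset.prod_dvd_of_isRelPrime (fun p hp q hq hpq => ?_) fun p hp =>
    ncard_image_pPart_dvd (Nat.prime_of_mem_primeFactors hp) hA hX
  have hpow {r : ℕ} (hr : r.Prime) : ∃ k, (pPart r '' X).ncard = r ^ k := by
    have : Fact r.Prime := ⟨hr⟩
    obtain ⟨R⟩ : Nonempty (Sylow r G) := inferInstance
    refine (hSyl r hr R).2 _ (image_pPart_mem_parts hr hA hX) ?_
    rintro _ ⟨x, -, rfl⟩
    exact range_pPartHom hr R ▸ ⟨x, rfl⟩
  have hp' := Nat.prime_of_mem_primeFactors hp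
  have hq' := Nat.prime_of_mem_primeFactors hq
  obtain ⟨k, hk⟩ := hpow hp'
  obtain ⟨l, hl⟩ := hpow hq'
  rw [Function.onFun, hk, hl, ← Nat.coprime_iff_isRelPrime]
  exact Nat.coprime_pow_primes _ _ hp' hq' hpq

end SRing

/-- Let `A` be an S-ring over a finite abelian group `G` such
that for every prime `p` the Sylow `p`-subgroup of `G` is an
`A`-subgroup on which `A` restricts to a `p`-S-ring. Then `A` is the
tensor product of its Sylow constituents: every basic set `X` equals the
product of its projections to the Sylow subgroups. -/
theorem sylowtens {G : Type*} [CommGroup G] [Fintype G] (A : SRing G)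
    (hSyl : ∀ (p : ℕ), p.Prime → ∀ P : Sylow p G,
      A.IsASubgroup P.toSubgroup ∧
      ∀ X ∈ A.parts, X ⊆ (P.toSubgroup : Set G) → ∃ k : ℕ, X.ncard = p ^ k) :
    ∀ X ∈ A.parts,
      X = {g : G | ∀ p : ℕ, p.Prime → ∃ x ∈ X, pPart p g = pPart p x} := by
  intro X hX
  refine eq_of_subset_of_ncard_le (fun x hx p _ => ⟨x, hx, rfl⟩) ?_
  calc _ ≤ (∏ p ∈ (Nat.card G).primeFactors, pPart p '' X).ncard :=
        ncard_le_ncard setOf_forall_pPart_mem_image_subset_prod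
    _ ≤ ∏ p ∈ (Nat.card G).primeFactors, (pPart p '' X).ncard := ncard_finset_prod_le _ _
    _ ≤ X.ncard :=
        Nat.le_of_dvd ((ncard_pos).2 (A.nonempty_mem X hX)) (A.prod_ncard_image_pPart_dvd hSyl hX)
end

section
/- Let X be a finite subset of an abelian group G, P a p-subgroup and H a p'-subgroup with G = P × H. Suppose λ = |X ∩ Hx| is the same for all x ∈ X and μ = |X ∩ Px| is the same for all x ∈ X, the projection X_P of X to P has p-power size, and the projection X_H of X to H has size coprime to p. Then X = X_P × X_H. -/
open scoped Pointwise

/-!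
Write `x = f x * g x` with `f x ∈ P`, `g x ∈ H`. Counting `X` along the fibres of `f` and of `g`
gives `|X| = λ |X_P| = μ |X_H|`, so `|X_H|` divides `λ` by coprimality. The fibre of `f` through
`x ∈ X` has `λ` elements and `g` maps it injectively into `X_H`, so it meets every fibre of `g`:
any `u ∈ X_P`, `v ∈ X_H` are the components of some `y ∈ X`, i.e. `u * v = y ∈ X`.
-/

namespace Set

variable {γ α β : Type*}

theorem ncard_eq_mul_ncard_image_of_ncard_fiber {X : Set γ} (hX : X.Finite) (f : γ → α)
    {n : ℕ} (hfib : ∀ x ∈ X, {y ∈ X | f y = f x}.ncard = n) :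
    X.ncard = n * (f '' X).ncard := by
  classical
  lift X to Finset γ using hX
  rw [← Finset.coe_image, ncard_coe_finset, ncard_coe_finset, Finset.card_eq_sum_card_image f X,
    Finset.sum_const_nat, mul_comm]
  rintro _ hb
  obtain ⟨x, hx, rfl⟩ := Finset.mem_image.mp hb
  rw [← hfib x hx, ← ncard_coe_finset, Finset.coe_filter]
  rfl

theorem exists_mem_eq_and_eq_of_coprime {X : Set γ} (hX : X.Finite) (f : γ → α) (g : γ → β)
    (hinj : InjOn (fun x => (f x, g x)) X) {m n : ℕ}
    (hf : ∀ x ∈ X, {y ∈ X | f y = f x}.ncard = m) (hg : ∀ x ∈ X, {y ∈ X | g y = g x}.ncard = n)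
    (hcop : (f '' X).ncard.Coprime (g '' X).ncard) :
    ∀ x ∈ X, ∀ x' ∈ X, ∃ y ∈ X, f y = f x ∧ g y = g x' := by
  intro x hx x' hx'
  set F := {y ∈ X | f y = f x}
  have hFX : F ⊆ X := sep_subset X _
  have hdvd : (g '' X).ncard ∣ m := by
    refine hcop.symm.dvd_of_dvd_mul_right ⟨n, ?_⟩
    rw [← ncard_eq_mul_ncard_image_of_ncard_fiber hX f hf,
      ncard_eq_mul_ncard_image_of_ncard_fiber hX g hg, mul_comm]
  have hgF : g '' F ⊆ g '' X := image_mono hFX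
  have hgF_card : (g '' F).ncard = m := by
    rw [InjOn.ncard_image, hf x hx]
    intro y hy z hz hyz
    exact hinj (hFX hy) (hFX hz) (Prod.ext (hy.2.trans hz.2.symm) hyz)
  have hm_pos : 0 < m := by
    rw [← hf x hx]
    exact (ncard_pos (hX.subset hFX)).mpr ⟨x, hx, rfl⟩
  have hgF_eq : g '' F = g '' X :=
    eq_of_subset_of_ncard_le hgF (by rw [hgF_card]; exact Nat.le_of_dvd hm_pos hdvd)
      (hX.image g)
  obtain ⟨y, ⟨hy, hyf⟩, hyg⟩ := hgF_eq ▸ mem_image_of_mem g hx'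
  exact ⟨y, hy, hyf, hyg⟩

end Set

namespace Subgroup.IsComplement

section Group

variable {G : Type*} [Group G] {P H : Subgroup G} (hc : IsComplement (P : Set G) H)

theorem equiv_mul_of_mem {u v : G} (hu : u ∈ P) (hv : v ∈ H) :
    hc.equiv (u * v) = (⟨u, hu⟩, ⟨v, hv⟩) :=
  hc.equiv.apply_symm_apply (⟨u, hu⟩, ⟨v, hv⟩)

theorem injective_coe_equiv_fst_snd :
    Function.Injective fun x => (((hc.equiv x).1 : G), ((hc.equiv x).2 : G)) := by
  intro x y h
  obtain ⟨h₁, h₂⟩ := Prod.mk.inj h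
  rw [← hc.equiv_fst_mul_equiv_snd x, ← hc.equiv_fst_mul_equiv_snd y, h₁, h₂]

theorem coe_equiv_snd_eq_iff_mul_inv_mem {x y : G} :
    ((hc.equiv y).2 : G) = (hc.equiv x).2 ↔ y * x⁻¹ ∈ P := by
  rw [Subtype.coe_inj, equiv_snd_eq_iff_rightCosetEquivalence, RightCosetEquivalence,
    rightCoset_eq_iff, ← inv_mem_iff, mul_inv_rev, inv_inv]

theorem image_coe_equiv_fst (X : Set G) :
    (fun x => ((hc.equiv x).1 : G)) '' X = {u | u ∈ P ∧ ∃ v ∈ H, u * v ∈ X} := by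
  ext u
  constructor
  · rintro ⟨x, hx, rfl⟩
    exact ⟨(hc.equiv x).1.2, _, (hc.equiv x).2.2, by rwa [equiv_fst_mul_equiv_snd]⟩
  · rintro ⟨hu, v, hv, huv⟩
    exact ⟨u * v, huv, by simp only [hc.equiv_mul_of_mem hu hv]⟩

theorem image_coe_equiv_snd (X : Set G) :
    (fun x => ((hc.equiv x).2 : G)) '' X = {v | v ∈ H ∧ ∃ u ∈ P, u * v ∈ X} := by
  ext v
  constructor
  · rintro ⟨x, hx, rfl⟩
    exact ⟨(hc.equiv x).2.2, _, (hc.equiv x).1.2, by rwa [equiv_fst_mul_equiv_snd]⟩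
  · rintro ⟨hv, u, hu, huv⟩
    exact ⟨u * v, huv, by simp only [hc.equiv_mul_of_mem hu hv]⟩

end Group

theorem coe_equiv_fst_eq_iff_mul_inv_mem {G : Type*} [CommGroup G] {P H : Subgroup G}
    (hc : IsComplement (P : Set G) H) {x y : G} :
    ((hc.equiv y).1 : G) = (hc.equiv x).1 ↔ y * x⁻¹ ∈ H := by
  rw [Subtype.coe_inj, equiv_fst_eq_iff_leftCosetEquivalence, LeftCosetEquivalence,
    leftCoset_eq_iff, ← inv_mem_iff, mul_inv_rev, inv_inv, mul_comm]

end Subgroup.IsComplement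

theorem proj_tensor_general {p : ℕ} {G : Type*} [CommGroup G] [Fintype G]
    (P H : Subgroup G)
    (hdisj : P ⊓ H = ⊥) (hsup : P ⊔ H = ⊤)
    (X : Set G) (lam mu : ℕ)
    (hlam : ∀ x ∈ X, {y ∈ X | y * x⁻¹ ∈ H}.ncard = lam)
    (hmu : ∀ x ∈ X, {y ∈ X | y * x⁻¹ ∈ P}.ncard = mu)
    (hXP : ∃ k : ℕ, {u : G | u ∈ P ∧ ∃ v ∈ H, u * v ∈ X}.ncard = p ^ k)
    (hXH : ({v : G | v ∈ H ∧ ∃ u ∈ P, u * v ∈ X}.ncard).Coprime p) :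
    X = {u : G | u ∈ P ∧ ∃ v ∈ H, u * v ∈ X} *
        {v : G | v ∈ H ∧ ∃ u ∈ P, u * v ∈ X} := by
  have hc : Subgroup.IsComplement (P : Set G) H :=
    Subgroup.isComplement'_of_disjoint_and_mul_eq_univ (disjoint_iff.mpr hdisj)
      (by rw [← Subgroup.mul_normal, hsup, Subgroup.coe_top])
  obtain ⟨k, hk⟩ := hXP
  rw [← hc.image_coe_equiv_fst X] at hk ⊢
  rw [← hc.image_coe_equiv_snd X] at hXH ⊢
  have hrect := Set.exists_mem_eq_and_eq_of_coprime X.toFinite _ _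
    hc.injective_coe_equiv_fst_snd.injOn
    (fun x hx => by simpa only [hc.coe_equiv_fst_eq_iff_mul_inv_mem] using hlam x hx)
    (fun x hx => by simpa only [hc.coe_equiv_snd_eq_iff_mul_inv_mem] using hmu x hx)
    (hk ▸ (hXH.pow_right k).symm)
  ext a
  constructor
  · intro ha
    exact ⟨_, Set.mem_image_of_mem _ ha, _, Set.mem_image_of_mem _ ha,
      hc.equiv_fst_mul_equiv_snd a⟩
  · rintro ⟨_, ⟨x, hx, rfl⟩, _, ⟨x', hx', rfl⟩, rfl⟩
    obtain ⟨y, hy, hfy, hgy⟩ := hrect x hx x' hx'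
    dsimp only
    rwa [← hfy, ← hgy, hc.equiv_fst_mul_equiv_snd]

/-- Let `X` be a subset of a finite abelian group `G = P × H`
(internal direct product of a `p`-subgroup `P` and a `p'`-subgroup `H`).
Suppose `|X ∩ Hx| = λ` and `|X ∩ Px| = μ` for all `x ∈ X`, the projection
`X_P` of `X` to `P` has `p`-power size, and the projection `X_H` to `H` has
size coprime to `p`. Then `X = X_P · X_H`. -/
theorem proj_tensor {p : ℕ} (hp : p.Prime) {G : Type*} [CommGroup G] [Fintype G]
    (P H : Subgroup G) (hP : IsPGroup p P) (hH : ¬ p ∣ Nat.card H)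
    (hdisj : P ⊓ H = ⊥) (hsup : P ⊔ H = ⊤)
    (X : Set G) (lam mu : ℕ)
    (hlam : ∀ x ∈ X, {y ∈ X | y * x⁻¹ ∈ H}.ncard = lam)
    (hmu : ∀ x ∈ X, {y ∈ X | y * x⁻¹ ∈ P}.ncard = mu)
    (hXP : ∃ k : ℕ, {u : G | u ∈ P ∧ ∃ v ∈ H, u * v ∈ X}.ncard = p ^ k)
    (hXH : ({v : G | v ∈ H ∧ ∃ u ∈ P, u * v ∈ X}.ncard).Coprime p) :
    X = {u : G | u ∈ P ∧ ∃ v ∈ H, u * v ∈ X} *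
        {v : G | v ∈ H ∧ ∃ u ∈ P, u * v ∈ X} :=
  proj_tensor_general P H hdisj hsup X lam mu hlam hmu hXP hXH
end

section
/- Let p be an odd prime, G a group of order p^5 with G ≅ C_{p^2} × C_p^3 scenario: specifically, let V ≤ G with V ≅ C_p^3, G/V ≅ C_p^2 generated by Vx and Vy, and suppose A is an indecomposable S-ring over G whose thin radical is V and whose basic sets outside V are exactly the cosets L_{ij}x^i y^j v with L_{ij} ≤ V of order p^2 (for (i,j) ≠ (0,0), v ranging over V). Then L_{ij} = L_{i'j'} if and only if ⟨V, x^i y^j⟩ = ⟨V, x^{i'} y^{j'}⟩. -/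
open scoped Pointwise

/-!
For `K ≤ V` of order `p²`, the elements of `V` together with those whose basic set is a
`K`-coset form a subgroup `H_K`: if the basic sets through `g` and `h` lie in `Kg` and `Kh`,
the basic set through `gh` lies in their product `Kgh`, and being a coset of a subgroup of
order `p²` it is `Kgh`. If `H_K = G`, then `A` is the `V/K`-wreath product, which
indecomposability forbids; since `|G : V| = p²`, `H_K` is then `V⟨g⟩` for each of its
elements `g ∉ V`. So `L_{ij} = L_{i'j'} = K` forces `V⟨x^i y^j⟩ = H_K = V⟨x^{i'} y^{j'}⟩`;
conversely `x^{i'} y^{j'} ∈ V⟨x^i y^j⟩ ≤ H_{L_{ij}}` makes its basic set an `L_{ij}`-coset.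
-/

namespace Subgroup

variable {G : Type*} [Group G]

theorem eq_of_lt_of_le_of_ne_top {p : ℕ} (hp : p.Prime) {V M H : Subgroup G}
    (hV : V.index = p ^ 2) (hVM : V < M) (hMH : M ≤ H) (hH : H ≠ ⊤) : M = H := by
  have hidx : V.relIndex M * M.relIndex H * H.index = p ^ 2 := by
    rw [relIndex_mul_relIndex V M H hVM.le hMH, relIndex_mul_index (hVM.le.trans hMH), hV]
  have ha : V.relIndex M ≠ 1 := fun h => hVM.not_ge (relIndex_eq_one.1 h)
  have hc : H.index ≠ 1 := fun h => hH (index_eq_one.1 h)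
  refine le_antisymm hMH (relIndex_eq_one.1 ?_)
  by_contra hb
  obtain ⟨hab, -⟩ :=
    (hp.mul_eq_prime_sq_iff (fun h => ha (Nat.eq_one_of_mul_eq_one_right h)) hc).1 hidx
  rcases Nat.prime_mul_iff.1 (hab ▸ hp) with ⟨-, h⟩ | ⟨-, h⟩
  exacts [hb h, ha h]

theorem coe_mul_singleton_of_mem {K : Subgroup G} {k : G} (hk : k ∈ K) :
    (K : Set G) * {k} = K := by
  rw [Set.mul_singleton]
  ext x
  simp [K.mul_mem_cancel_right (K.inv_mem hk)]

theorem mem_coe_mul_singleton (K : Subgroup G) (g : G) : g ∈ (K : Set G) * {g} :=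
  ⟨1, K.one_mem, g, rfl, one_mul g⟩

theorem coe_mul_singleton_eq_of_subset {K M : Subgroup G} [Finite K]
    (hKM : Nat.card K ≤ Nat.card M) {z w : G} (h : (M : Set G) * {z} ⊆ (K : Set G) * {w}) :
    (M : Set G) * {z} = (K : Set G) * {w} := by
  obtain ⟨k, hk, _, rfl, rfl⟩ := h (mem_coe_mul_singleton M z)
  have hMK : M ≤ K := fun m hm => by
    obtain ⟨k', hk', _, rfl, hmk⟩ := h ⟨m, hm, _, rfl, rfl⟩
    have hmk : k' = m * k := by simpa only [← mul_assoc, mul_left_inj] using hmk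
    rw [eq_mul_inv_of_mul_eq hmk.symm]
    exact K.mul_mem hk' (K.inv_mem hk)
  rw [eq_of_le_of_card_ge hMK hKM, ← Set.singleton_mul_singleton, ← mul_assoc,
    coe_mul_singleton_of_mem hk]

end Subgroup

namespace SRing

section Group

variable {G : Type*} [Group G] (A : SRing G)

/-- `A` is a nontrivial generalized `U/L`-wreath product; `A` is indecomposable if it is one
for no `U` and `L`. -/
def IsWreathProduct (U L : Subgroup G) : Prop :=
  L ≤ U ∧ L ≠ ⊥ ∧ U ≠ ⊤ ∧ A.IsASubgroup U ∧ A.IsASubgroup L ∧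
    ∀ X ∈ A.parts, ¬ X ⊆ (U : Set G) → ∀ l ∈ L, l • X = X

def HasCosetParts (n : ℕ) : Prop :=
  ∀ X ∈ A.parts, ¬ X ⊆ A.thin →
    ∃ M : Subgroup G, Nat.card M = n ∧ ∃ z, X = (M : Set G) * {z}

theorem subset_mul_of_mem [Finite G] {X Y Z : Set G} (hX : X ∈ A.parts) (hY : Y ∈ A.parts)
    (hZ : Z ∈ A.parts) {z : G} (hz : z ∈ Z) (hzXY : z ∈ X * Y) : Z ⊆ X * Y := by
  intro w hw
  obtain ⟨a, ha, b, hb, rfl⟩ := hzXY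
  have hpos : 0 < {q : G × G | q.1 ∈ X ∧ q.2 ∈ Y ∧ q.1 * q.2 = a * b}.ncard :=
    (Set.ncard_pos (Set.toFinite _)).2 ⟨(a, b), ha, hb, rfl⟩
  rw [A.structConst X hX Y hY Z hZ _ hz w hw] at hpos
  obtain ⟨⟨c, d⟩, hc, hd, rfl⟩ := (Set.ncard_pos (Set.toFinite _)).1 hpos
  exact Set.mul_mem_mul hc hd

theorem isASubgroup_of_subset_thin {U : Subgroup G} (hU : (U : Set G) ⊆ A.thin) :
    A.IsASubgroup U := by
  intro X hX g hg hgU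
  rw [A.eq_of_mem X hX {g} (hU hgU) g hg rfl]
  exact Set.singleton_subset_iff.2 hgU

theorem eq_of_coset_mem_parts {K M : Subgroup G} {g : G} (hK : (K : Set G) * {g} ∈ A.parts)
    (hM : (M : Set G) * {g} ∈ A.parts) : K = M := by
  have h := congrArg (· * {g⁻¹}) (A.eq_of_mem _ hK _ hM g
    (Subgroup.mem_coe_mul_singleton K g) (Subgroup.mem_coe_mul_singleton M g))
  simpa only [mul_assoc, Set.singleton_mul_singleton, mul_inv_cancel, Set.singleton_one,
    mul_one, SetLike.coe_set_eq] using h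

theorem notMem_thin_of_coset_mem_parts {K : Subgroup G} (hK : K ≠ ⊥) {g : G}
    (hg : (K : Set G) * {g} ∈ A.parts) : g ∉ A.thin := fun hthin =>
  hK (A.eq_of_coset_mem_parts hg (by rwa [Subgroup.coe_bot, Set.singleton_mul_singleton, one_mul]))

theorem exists_mem_parts_subset_coset {K : Subgroup G} {g : G}
    (hg : g ∈ A.thin ∨ (K : Set G) * {g} ∈ A.parts) :
    ∃ X ∈ A.parts, g ∈ X ∧ X ⊆ (K : Set G) * {g} := by
  rcases hg with hg | hg
  exacts [⟨{g}, hg, rfl, Set.singleton_subset_iff.2 (Subgroup.mem_coe_mul_singleton K g)⟩,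
    ⟨_, hg, Subgroup.mem_coe_mul_singleton K g, subset_rfl⟩]

end Group

section CommGroup

variable {G : Type*} [CommGroup G] [Finite G] (A : SRing G) {n : ℕ}

def cosetSubgroup
    (hcos : A.HasCosetParts n) (K : Subgroup G) (hK : Nat.card K = n) : Subgroup G where
  carrier := {g | g ∈ A.thin ∨ (K : Set G) * {g} ∈ A.parts}
  one_mem' := Or.inl A.one_mem
  mul_mem' := by
    intro g h hg hh
    obtain ⟨X, hX, hgX, hXK⟩ := A.exists_mem_parts_subset_coset hg
    obtain ⟨Y, hY, hhY, hYK⟩ := A.exists_mem_parts_subset_coset hh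
    obtain ⟨Z, hZ, hghZ⟩ := A.exists_mem (g * h)
    have hZK : Z ⊆ (K : Set G) * {g * h} :=
      calc Z ⊆ X * Y := A.subset_mul_of_mem hX hY hZ hghZ (Set.mul_mem_mul hgX hhY)
        _ ⊆ (K : Set G) * {g} * ((K : Set G) * {h}) := Set.mul_subset_mul hXK hYK
        _ = (K : Set G) * {g * h} := by
          rw [mul_mul_mul_comm, coe_mul_coe, Set.singleton_mul_singleton]
    by_cases hZthin : Z ⊆ A.thin
    · exact Or.inl (hZthin hghZ)
    · obtain ⟨M, hM, z, rfl⟩ := hcos Z hZ hZthin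
      rw [Subgroup.coe_mul_singleton_eq_of_subset (hK.trans hM.symm).le hZK] at hZ
      exact Or.inr hZ
  inv_mem' := by
    rintro g (hg | hg)
    · have h := A.inv_mem _ hg
      rw [Set.inv_singleton] at h
      exact Or.inl h
    · right
      simpa only [mul_inv_rev, Set.inv_singleton, inv_coe_set, mul_comm] using A.inv_mem _ hg

variable {A} (hcos : A.HasCosetParts n) {K : Subgroup G} (hK : Nat.card K = n)

theorem coset_mem_parts_of_mem_cosetSubgroup {g : G} (hg : g ∈ A.cosetSubgroup hcos K hK)
    (hgt : g ∉ A.thin) : (K : Set G) * {g} ∈ A.parts :=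
  hg.resolve_left hgt

theorem sup_closure_le_cosetSubgroup {V : Subgroup G} (hV : A.thin = V) {g : G}
    (hg : (K : Set G) * {g} ∈ A.parts) :
    V ⊔ Subgroup.closure {g} ≤ A.cosetSubgroup hcos K hK :=
  sup_le (fun _ hv => Or.inl (hV ▸ hv))
    ((Subgroup.closure_le _).2 (Set.singleton_subset_iff.2 (Or.inr hg)))

theorem isWreathProduct_of_cosetSubgroup_eq_top {V : Subgroup G} (hV : A.thin = V)
    (hVtop : V ≠ ⊤) (hKV : K ≤ V) (hK0 : K ≠ ⊥) (htop : A.cosetSubgroup hcos K hK = ⊤) :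
    A.IsWreathProduct V K := by
  refine ⟨hKV, hK0, hVtop, A.isASubgroup_of_subset_thin hV.ge,
    A.isASubgroup_of_subset_thin (hV ▸ hKV), fun X hX hXV l hl => ?_⟩
  obtain ⟨g, hgX, hgV⟩ := Set.not_subset.1 hXV
  have hg := coset_mem_parts_of_mem_cosetSubgroup hcos hK (htop ▸ Subgroup.mem_top g) (hV ▸ hgV)
  rw [A.eq_of_mem X hX _ hg g hgX (Subgroup.mem_coe_mul_singleton K g), ← smul_mul_assoc,
    smul_coe_set hl]

theorem sup_closure_eq_cosetSubgroup {p : ℕ} (hp : p.Prime) {V : Subgroup G}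
    (hV : A.thin = V) (hidx : V.index = p ^ 2) (hwr : ¬ A.IsWreathProduct V K) (hKV : K ≤ V)
    (hK0 : K ≠ ⊥) {g : G} (hg : (K : Set G) * {g} ∈ A.parts) :
    V ⊔ Subgroup.closure {g} = A.cosetSubgroup hcos K hK := by
  have hVtop : V ≠ ⊤ := by
    rintro rfl
    rw [Subgroup.index_top] at hidx
    exact (Nat.one_lt_pow two_ne_zero hp.one_lt).ne hidx
  refine Subgroup.eq_of_lt_of_le_of_ne_top hp hidx ?_ (sup_closure_le_cosetSubgroup hcos hK hV hg)
    fun htop => hwr (isWreathProduct_of_cosetSubgroup_eq_top hcos hK hV hVtop hKV hK0 htop)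
  refine lt_of_le_of_ne le_sup_left fun h => A.notMem_thin_of_coset_mem_parts hK0 hg ?_
  rw [hV, h]
  exact Subgroup.mem_sup_right (Subgroup.mem_closure_singleton_self g)

theorem eq_of_mem_cosetSubgroup {M : Subgroup G} (hM0 : M ≠ ⊥) {g : G}
    (hg : g ∈ A.cosetSubgroup hcos K hK) (hg' : (M : Set G) * {g} ∈ A.parts) : K = M :=
  A.eq_of_coset_mem_parts
    (coset_mem_parts_of_mem_cosetSubgroup hcos hK hg (A.notMem_thin_of_coset_mem_parts hM0 hg'))
    hg'

end CommGroup

end SRing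

theorem p2coset1_general {p : ℕ} (hp : p.Prime)
    {G : Type*} [CommGroup G] [Fintype G] (hcard : Nat.card G = p ^ 5)
    (V : Subgroup G)
    (hV : Nonempty (V ≃* Multiplicative (ZMod p) × Multiplicative (ZMod p) ×
      Multiplicative (ZMod p)))
    (x y : G)
    (A : SRing G) (hthin : A.thin = (V : Set G))
    (hind : ¬ ∃ U L : Subgroup G, L ≤ U ∧ L ≠ ⊥ ∧ U ≠ ⊤ ∧
      A.IsASubgroup U ∧ A.IsASubgroup L ∧
      ∀ X ∈ A.parts, ¬ X ⊆ (U : Set G) → ∀ l ∈ L, l • X = X)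
    (L : ℕ → ℕ → Subgroup G)
    (hLV : ∀ i j : ℕ, i < p → j < p → ¬ (i = 0 ∧ j = 0) →
      L i j ≤ V ∧ Nat.card (L i j) = p ^ 2)
    (hcoset_mem : ∀ i j : ℕ, i < p → j < p → ¬ (i = 0 ∧ j = 0) → ∀ v ∈ V,
      ((L i j : Set G) * {x ^ i * y ^ j * v}) ∈ A.parts)
    (houtside : ∀ X ∈ A.parts, ¬ X ⊆ (V : Set G) →
      ∃ i j : ℕ, i < p ∧ j < p ∧ ¬ (i = 0 ∧ j = 0) ∧
        ∃ v ∈ V, X = (L i j : Set G) * {x ^ i * y ^ j * v}) :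
    ∀ i j i' j' : ℕ, i < p → j < p → ¬ (i = 0 ∧ j = 0) →
      i' < p → j' < p → ¬ (i' = 0 ∧ j' = 0) →
      (L i j = L i' j' ↔
        V ⊔ Subgroup.closure {x ^ i * y ^ j} =
          V ⊔ Subgroup.closure {x ^ i' * y ^ j'}) := by
  intro i j i' j' hi hj hij hi' hj' hij'
  have hcardV : Nat.card V = p ^ 3 := by
    rw [Nat.card_congr hV.some.toEquiv]
    simp only [Nat.card_prod, Nat.card_congr Multiplicative.toAdd, Nat.card_zmod]
    ring
  have hidx : V.index = p ^ 2 := by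
    refine Nat.eq_of_mul_eq_mul_left (pow_pos hp.pos 3) ?_
    rw [← hcardV, V.card_mul_index, hcard, hcardV, ← pow_add]
  have hcos : A.HasCosetParts (p ^ 2) := by
    intro X hX hXV
    obtain ⟨a, b, ha, hb, hab, v, -, rfl⟩ := houtside X hX (hthin ▸ hXV)
    exact ⟨L a b, (hLV a b ha hb hab).2, _, rfl⟩
  have hpart : ∀ a b, a < p → b < p → ¬ (a = 0 ∧ b = 0) →
      (L a b : Set G) * {x ^ a * y ^ b} ∈ A.parts := fun a b ha hb hab => by
    simpa using hcoset_mem a b ha hb hab 1 V.one_mem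
  have hbot : ∀ a b, a < p → b < p → ¬ (a = 0 ∧ b = 0) → L a b ≠ ⊥ :=
    fun a b ha hb hab => (Subgroup.one_lt_card_iff_ne_bot _).1
      ((hLV a b ha hb hab).2 ▸ Nat.one_lt_pow two_ne_zero hp.one_lt)
  obtain ⟨hKV, hK⟩ := hLV i j hi hj hij
  have hwr : ¬ A.IsWreathProduct V (L i j) := fun h => hind ⟨V, L i j, h⟩
  constructor
  · intro hL
    have hpart' : (L i j : Set G) * {x ^ i' * y ^ j'} ∈ A.parts := hL ▸ hpart i' j' hi' hj' hij'
    rw [SRing.sup_closure_eq_cosetSubgroup hcos hK hp hthin hidx hwr hKV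
        (hbot i j hi hj hij) (hpart i j hi hj hij),
      SRing.sup_closure_eq_cosetSubgroup hcos hK hp hthin hidx hwr hKV (hbot i j hi hj hij) hpart']
  · intro h
    refine SRing.eq_of_mem_cosetSubgroup hcos hK (hbot i' j' hi' hj' hij') ?_
      (hpart i' j' hi' hj' hij')
    exact SRing.sup_closure_le_cosetSubgroup hcos hK hthin (hpart i j hi hj hij)
      (h ▸ Subgroup.mem_sup_right (Subgroup.mem_closure_singleton_self _))

/-- Let `p` be an odd prime, `G` abelian of order `p^5`,
`V ≤ G` with `V ≅ C_p³` and `G/V ≅ C_p²` generated by the images of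
`x, y`. Suppose `A` is an indecomposable S-ring over `G` with thin
radical `V` whose basic sets outside `V` are exactly the cosets
`L_{ij}·x^i y^j v` with `L_{ij} ≤ V` of order `p²`. Then
`L_{ij} = L_{i'j'}` iff `⟨V, x^i y^j⟩ = ⟨V, x^{i'} y^{j'}⟩`. -/
theorem p2coset1 {p : ℕ} (hp : p.Prime) (hodd : p ≠ 2)
    {G : Type*} [CommGroup G] [Fintype G] (hcard : Nat.card G = p ^ 5)
    (V : Subgroup G)
    (hV : Nonempty (V ≃* Multiplicative (ZMod p) × Multiplicative (ZMod p) ×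
      Multiplicative (ZMod p)))
    (x y : G)
    (hrep : ∀ g : G, ∃ i j : ℕ, i < p ∧ j < p ∧ g * (x ^ i * y ^ j)⁻¹ ∈ V)
    (hfree : ∀ i j : ℕ, x ^ i * y ^ j ∈ V → p ∣ i ∧ p ∣ j)
    (A : SRing G) (hthin : A.thin = (V : Set G))
    (hind : ¬ ∃ U L : Subgroup G, L ≤ U ∧ L ≠ ⊥ ∧ U ≠ ⊤ ∧
      A.IsASubgroup U ∧ A.IsASubgroup L ∧
      ∀ X ∈ A.parts, ¬ X ⊆ (U : Set G) → ∀ l ∈ L, l • X = X)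
    (L : ℕ → ℕ → Subgroup G)
    (hLV : ∀ i j : ℕ, i < p → j < p → ¬ (i = 0 ∧ j = 0) →
      L i j ≤ V ∧ Nat.card (L i j) = p ^ 2)
    (hcoset_mem : ∀ i j : ℕ, i < p → j < p → ¬ (i = 0 ∧ j = 0) → ∀ v ∈ V,
      ((L i j : Set G) * {x ^ i * y ^ j * v}) ∈ A.parts)
    (houtside : ∀ X ∈ A.parts, ¬ X ⊆ (V : Set G) →
      ∃ i j : ℕ, i < p ∧ j < p ∧ ¬ (i = 0 ∧ j = 0) ∧
        ∃ v ∈ V, X = (L i j : Set G) * {x ^ i * y ^ j * v}) :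
    ∀ i j i' j' : ℕ, i < p → j < p → ¬ (i = 0 ∧ j = 0) →
      i' < p → j' < p → ¬ (i' = 0 ∧ j' = 0) →
      (L i j = L i' j' ↔
        V ⊔ Subgroup.closure {x ^ i * y ^ j} =
          V ⊔ Subgroup.closure {x ^ i' * y ^ j'}) :=
  p2coset1_general hp hcard V hV x y A hthin hind L hLV hcoset_mem houtside
end
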